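/- arXiv:1905.06160 — 8 statements merged into one kernel-verified Lean document; each statement's English description precedes it below -/
import Mathlib

section
/- A morphism of simplicial sets has the left lifting property with respect to every trivial fibration if and only if it is a monomorphism; consequently every trivial fibration has the right lifting property with respect to every monomorphism, so the cofibrations of the Kan–Quillen model structure (the maps with the left lifting property against all trivial fibrations) are exactly the monomorphisms. -/
open CategoryTheory CategoryTheory.Limits Simplicial SSet

/-- A trivial fibration of simplicial sets: a morphism with the right lifting property
with respect to all boundary inclusions `∂Δ[n] → Δ[n]`. -/
def TrivialFibration {X Y : SSet.{0}} (p : X ⟶ Y) : Prop :=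
  ∀ n : ℕ, HasLiftingProperty (boundary.{0} n).ι p

open Opposite SimplexCategory

namespace LLPAux

/-- A monotone section of a surjective monotone map, passing through a prescribed point. -/
lemma exists_section {x y : SimplexCategory} (σ : x ⟶ y)
    (hσ : Function.Surjective σ.toOrderHom) (i : Fin (x.len + 1)) :
    ∃ d : y ⟶ x, d ≫ σ = 𝟙 y ∧ d.toOrderHom (σ.toOrderHom i) = i := by
  classical
  have hne : ∀ j : Fin (y.len + 1),
      (Finset.univ.filter (fun k => σ.toOrderHom k = j)).Nonempty := by
    intro j
    obtain ⟨k, hk⟩ := hσ j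
    exact ⟨k, by simp [hk]⟩
  set g : Fin (y.len + 1) → Fin (x.len + 1) := fun j =>
    if j = σ.toOrderHom i then i else (Finset.univ.filter (fun k => σ.toOrderHom k = j)).min' (hne j)
    with hg
  have hsec : ∀ j, σ.toOrderHom (g j) = j := by
    intro j
    by_cases h : j = σ.toOrderHom i
    · simp [hg, h]
    · have := Finset.min'_mem _ (hne j)
      simp only [Finset.mem_filter] at this
      simp [hg, h, this.2]
  have hstrict : StrictMono g := by
    intro j j' hjj'
    have h1 : σ.toOrderHom (g j) < σ.toOrderHom (g j') := by rw [hsec, hsec]; exact hjj'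
    by_contra h
    push_neg at h
    exact absurd (σ.toOrderHom.monotone h) (not_le.mpr h1)
  refine ⟨Hom.mk ⟨g, hstrict.monotone⟩, ?_, by simp [hg]⟩
  apply Hom.ext
  apply OrderHom.ext
  funext j
  simpa using hsec j



variable {A B X Y : SSet.{0}}

/-- A partial lift for the lifting problem `u : A ⟶ X`, `v : B ⟶ Y` along `f : A ⟶ B`
and `p : X ⟶ Y`: a sub-presheaf `S` of `B` containing the image of `f`, together
with a compatible partial diagonal. -/
structure PartialLift (f : A ⟶ B) (p : X ⟶ Y) (u : A ⟶ X) (v : B ⟶ Y) where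
  S : ∀ m : SimplexCategoryᵒᵖ, Set (B.obj m)
  closed : ∀ {m m' : SimplexCategoryᵒᵖ} (θ : m ⟶ m') {z : B.obj m}, z ∈ S m → B.map θ z ∈ S m'
  hf : ∀ {m} (a : A.obj m), f.app m a ∈ S m
  l : ∀ {m} (z : B.obj m), z ∈ S m → X.obj m
  hnat : ∀ {m m'} (θ : m ⟶ m') {z} (hz : z ∈ S m), l (B.map θ z) (closed θ hz) = X.map θ (l z hz)
  hu : ∀ {m} (a : A.obj m), l (f.app m a) (hf a) = u.app m a
  hp : ∀ {m} {z} (hz : z ∈ S m), p.app m (l z hz) = v.app m z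

namespace PartialLift

variable {f : A ⟶ B} {p : X ⟶ Y} {u : A ⟶ X} {v : B ⟶ Y}

instance : Preorder (PartialLift f p u v) where
  le P Q := ∃ h : ∀ m, P.S m ⊆ Q.S m, ∀ m (z : B.obj m) (hz : z ∈ P.S m),
    Q.l z (h m hz) = P.l z hz
  le_refl P := ⟨fun _ => le_refl _, fun _ _ _ => rfl⟩
  le_trans P Q R := by
    rintro ⟨h1, e1⟩ ⟨h2, e2⟩
    exact ⟨fun m => (h1 m).trans (h2 m), fun m z hz => (e2 m z (h1 m hz)).trans (e1 m z hz)⟩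

/-- Any two members of a chain agree on common elements. -/
lemma chain_agree {c : Set (PartialLift f p u v)} (hc : IsChain (· ≤ ·) c)
    {P Q : PartialLift f p u v} (hP : P ∈ c) (hQ : Q ∈ c) {m} {z : B.obj m}
    (hzP : z ∈ P.S m) (hzQ : z ∈ Q.S m) : P.l z hzP = Q.l z hzQ := by
  rcases eq_or_ne P Q with rfl | hne
  · rfl
  rcases hc hP hQ hne with ⟨h, e⟩ | ⟨h, e⟩
  · exact (e m z hzP).symm
  · exact e m z hzQ

end PartialLift

namespace PartialLift

variable {f : A ⟶ B} {p : X ⟶ Y} {u : A ⟶ X} {v : B ⟶ Y}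

/-- The initial partial lift, defined on the image of `f`. -/
noncomputable def bot (hf : Mono f) (sq : u ≫ p = f ≫ v) : PartialLift f p u v := by
  classical
  have hinj : ∀ m : SimplexCategoryᵒᵖ, Function.Injective (f.app m) := by
    intro m
    rw [← CategoryTheory.mono_iff_injective]
    exact (NatTrans.mono_iff_mono_app f).1 hf m
  have key : ∀ {m} (z : B.obj m) (hz : z ∈ Set.range (f.app m)) (a : A.obj m),
      f.app m a = z → hz.choose = a := fun z hz a ha => hinj _ (hz.choose_spec.trans ha.symm)
  refine
  { S := fun m => Set.range (f.app m)
    closed := ?_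
    hf := fun a => ⟨a, rfl⟩
    l := fun {m} z hz => u.app m hz.choose
    hnat := ?_
    hu := ?_
    hp := ?_ }
  · rintro m m' θ z ⟨a, rfl⟩
    exact ⟨A.map θ a, (NatTrans.naturality_apply f θ a)⟩
  · intro m m' θ z hz
    have h1 : f.app m' (A.map θ hz.choose) = B.map θ z := by
      rw [NatTrans.naturality_apply f θ, hz.choose_spec]
    show u.app m' (Exists.choose _) = X.map θ (u.app m hz.choose)
    rw [key (B.map θ z) ⟨A.map θ hz.choose, h1⟩ (A.map θ hz.choose) h1]
    exact (NatTrans.naturality_apply u θ hz.choose)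
  · intro m a
    show u.app m (Exists.choose _) = u.app m a
    rw [key (f.app m a) ⟨a, rfl⟩ a rfl]
  · intro m z hz
    show p.app m (u.app m hz.choose) = v.app m z
    have h2 := ConcreteCategory.congr_hom (NatTrans.congr_app sq m) hz.choose
    simp only [NatTrans.comp_app, types_comp_apply] at h2
    rw [show p.app m (u.app m hz.choose) = v.app m (f.app m hz.choose) from h2, hz.choose_spec]

end PartialLift

namespace PartialLift

variable {f : A ⟶ B} {p : X ⟶ Y} {u : A ⟶ X} {v : B ⟶ Y}

/-- The upper bound of a nonempty chain of partial lifts. -/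
noncomputable def chainSup {c : Set (PartialLift f p u v)} (hc : IsChain (· ≤ ·) c)
    (P₀ : PartialLift f p u v) (hP₀ : P₀ ∈ c) : PartialLift f p u v := by
  classical
  refine
  { S := fun m => {z | ∃ P ∈ c, z ∈ P.S m}
    closed := ?_
    hf := fun {m} a => ⟨P₀, hP₀, P₀.hf a⟩
    l := fun {m} z hz => hz.choose.l z hz.choose_spec.2
    hnat := ?_
    hu := ?_
    hp := ?_ }
  · rintro m m' θ z ⟨P, hP, hz⟩
    exact ⟨P, hP, P.closed θ hz⟩
  · intro m m' θ z hz
    set hz' : ∃ P ∈ c, B.map θ z ∈ P.S m' := ⟨hz.choose, hz.choose_spec.1, hz.choose.closed θ hz.choose_spec.2⟩ with _hh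
    show hz'.choose.l (B.map θ z) _ = X.map θ (hz.choose.l z hz.choose_spec.2)
    rw [chain_agree hc hz'.choose_spec.1 hz.choose_spec.1 hz'.choose_spec.2
      (hz.choose.closed θ hz.choose_spec.2)]
    exact hz.choose.hnat θ hz.choose_spec.2
  · intro m a
    set hz : ∃ P ∈ c, f.app m a ∈ P.S m := ⟨P₀, hP₀, P₀.hf a⟩
    show hz.choose.l (f.app m a) _ = u.app m a
    rw [chain_agree hc hz.choose_spec.1 hP₀ hz.choose_spec.2 (P₀.hf a)]
    exact P₀.hu a
  · intro m z hz
    exact hz.choose.hp hz.choose_spec.2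

lemma le_chainSup {c : Set (PartialLift f p u v)} (hc : IsChain (· ≤ ·) c)
    (P₀ : PartialLift f p u v) (hP₀ : P₀ ∈ c) {P : PartialLift f p u v} (hP : P ∈ c) :
    P ≤ chainSup hc P₀ hP₀ := by
  refine ⟨fun m z hz => ⟨P, hP, hz⟩, fun m z hz => ?_⟩
  exact chain_agree hc (Exists.choose_spec (⟨P, hP, hz⟩ : ∃ Q ∈ c, z ∈ Q.S m)).1 hP
    _ hz

/-- Zorn: there is a maximal partial lift. -/
lemma exists_max (hf : Mono f) (sq : u ≫ p = f ≫ v) :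
    ∃ P : PartialLift f p u v, IsMax P := by
  apply zorn_le
  intro c hc
  rcases c.eq_empty_or_nonempty with rfl | ⟨P₀, hP₀⟩
  · exact ⟨bot hf sq, by simp [upperBounds]⟩
  · exact ⟨chainSup hc P₀ hP₀, fun P hP => le_chainSup hc P₀ hP₀ hP⟩

end PartialLift

namespace PartialLift

variable {f : A ⟶ B} {p : X ⟶ Y} {u : A ⟶ X} {v : B ⟶ Y}

/-- Pulling back along a non-surjective map lands in the sub-presheaf, provided
all lower-dimensional simplices are in it. -/
lemma mem_push (P : PartialLift f p u v) {n₀ : ℕ} (b : B.obj (op ⦋n₀⦌))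
    (hlow : ∀ (x : SimplexCategory), x.len < n₀ → ∀ z : B.obj (op x), z ∈ P.S (op x)) :
    ∀ (x : SimplexCategory) (γ : x ⟶ ⦋n₀⦌), ¬Function.Surjective ⇑γ.toOrderHom →
      B.map γ.op b ∈ P.S (op x) := by
  intro x
  induction x using SimplexCategory.rec with
  | mk m =>
    intro γ hns
    match n₀, b, hlow, γ, hns with
    | 0, b, hlow, γ, hns =>
      exact absurd (fun j => ⟨0, Subsingleton.elim (α := Fin 1) _ _⟩) hns
    | (k+1), b, hlow, γ, hns =>
      rw [Function.Surjective] at hns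
      push_neg at hns
      obtain ⟨j, hj⟩ := hns
      have hspec := factor_δ_spec γ j hj
      rw [← hspec, op_comp, FunctorToTypes.map_comp_apply]
      exact P.closed _ (hlow ⦋k⦌ (by simp) _)

/-- Pulling back along a surjective map does not land in the sub-presheaf if `b` is not in it. -/
lemma not_mem_push (P : PartialLift f p u v) {n₀ : ℕ} {b : B.obj (op ⦋n₀⦌)}
    (hb : b ∉ P.S (op ⦋n₀⦌)) (x : SimplexCategory) (γ : x ⟶ ⦋n₀⦌)
    (hs : Function.Surjective ⇑γ.toOrderHom) : B.map γ.op b ∉ P.S (op x) := by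
  intro hmem
  obtain ⟨d, hd, -⟩ := LLPAux.exists_section γ hs 0
  have : B.map d.op (B.map γ.op b) = b := by
    rw [← FunctorToTypes.map_comp_apply, ← op_comp, hd, op_id, FunctorToTypes.map_id_apply]
  exact hb (this ▸ P.closed d.op hmem)

/-- Eilenberg–Zilber style uniqueness: two surjections pulling `b` back to the same
simplex agree. -/
lemma push_inj (P : PartialLift f p u v) {n₀ : ℕ} {b : B.obj (op ⦋n₀⦌)}
    (hb : b ∉ P.S (op ⦋n₀⦌))
    (hlow : ∀ (x : SimplexCategory), x.len < n₀ → ∀ z : B.obj (op x), z ∈ P.S (op x))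
    {x : SimplexCategory} {σ τ : x ⟶ ⦋n₀⦌}
    (hσ : Function.Surjective ⇑σ.toOrderHom) (hτ : Function.Surjective ⇑τ.toOrderHom)
    (heq : B.map σ.op b = B.map τ.op b) : σ = τ := by
  apply SimplexCategory.Hom.ext
  apply OrderHom.ext
  funext i
  obtain ⟨d, hd, hdi⟩ := LLPAux.exists_section σ hσ i
  have hbb : B.map (d ≫ τ).op b = b := by
    rw [op_comp, FunctorToTypes.map_comp_apply, ← heq, ← FunctorToTypes.map_comp_apply,
      ← op_comp, hd, op_id, FunctorToTypes.map_id_apply]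
  have hsurj : Function.Surjective ⇑(d ≫ τ).toOrderHom := by
    by_contra hns
    exact hb (hbb ▸ P.mem_push b hlow ⦋n₀⦌ (d ≫ τ) hns)
  have hepi : Epi (d ≫ τ) := SimplexCategory.epi_iff_surjective.mpr hsurj
  have hid : d ≫ τ = 𝟙 (SimplexCategory.mk n₀) := SimplexCategory.eq_id_of_epi _
  have := congrFun (congrArg (fun (g : SimplexCategory.mk n₀ ⟶ SimplexCategory.mk n₀) =>
    ⇑g.toOrderHom) hid) (σ.toOrderHom i)
  simp only [SimplexCategory.id_toOrderHom, OrderHom.id_coe, id_eq] at this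
  change τ.toOrderHom (d.toOrderHom (σ.toOrderHom i)) = σ.toOrderHom i at this
  rw [hdi] at this
  exact this.symm

end PartialLift

namespace PartialLift

variable {f : A ⟶ B} {p : X ⟶ Y} {u : A ⟶ X} {v : B ⟶ Y}

lemma l_congr (P : PartialLift f p u v) {m} {z z' : B.obj m} (e : z = z')
    (hz : z ∈ P.S m) (hz' : z' ∈ P.S m) : P.l z hz = P.l z' hz' := by subst e; rfl

/-- A maximal partial lift is total. -/
lemma total_of_max (htf : ∀ n : ℕ, HasLiftingProperty (boundary.{0} n).ι p)
    {P : PartialLift f p u v} (hmax : IsMax P) :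
    ∀ (m : SimplexCategoryᵒᵖ) (z : B.obj m), z ∈ P.S m := by
  classical
  by_contra hcon
  push_neg at hcon
  obtain ⟨m₁, z₁, hz₁⟩ := hcon
  have key : ∀ (x : SimplexCategory) (z : B.obj (op x)), z ∉ P.S (op x) →
      ∃ z' : B.obj (op ⦋x.len⦌), z' ∉ P.S (op ⦋x.len⦌) := by
    intro x
    induction x using SimplexCategory.rec with
    | mk n => exact fun z hz => ⟨z, hz⟩
  have hBad : ∃ n : ℕ, ∃ z' : B.obj (op ⦋n⦌), z' ∉ P.S (op ⦋n⦌) :=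
    ⟨m₁.unop.len, key m₁.unop z₁ hz₁⟩
  set n₀ := Nat.find hBad with hn₀
  obtain ⟨b, hb⟩ := Nat.find_spec hBad
  have hlow : ∀ (x : SimplexCategory), x.len < n₀ → ∀ w : B.obj (op x), w ∈ P.S (op x) := by
    intro x hx w
    by_contra hw
    exact Nat.find_min hBad hx (key x w hw)
  -- the classifying map of `b`
  let ub : Δ[n₀] ⟶ B :=
    { app := fun m => ↾fun α => B.map ((stdSimplex.objEquiv α)).op b
      naturality := by
        intro m m' θ
        ext α
        show B.map (stdSimplex.objEquiv (Δ[n₀].map θ α)).op b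
          = B.map θ (B.map (stdSimplex.objEquiv α).op b)
        rw [stdSimplex.map_apply, Equiv.apply_symm_apply, op_comp,
          Quiver.Hom.op_unop, FunctorToTypes.map_comp_apply] }
  have hbd : ∀ {m : SimplexCategoryᵒᵖ} (α : (∂Δ[n₀] : SSet).obj m),
      B.map (stdSimplex.objEquiv α.1).op b ∈ P.S m :=
    fun α => P.mem_push b hlow _ _ α.2
  -- the partial lift on the boundary of `b`
  let ux : (∂Δ[n₀] : SSet) ⟶ X :=
    { app := fun m => ↾fun α => P.l _ (hbd α)
      naturality := by
        intro m m' θ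
        ext α
        show P.l _ (hbd ((∂Δ[n₀] : SSet).map θ α)) = X.map θ (P.l _ (hbd α))
        refine (P.l_congr ?_ _ _).trans (P.hnat θ (hbd α))
        show B.map (stdSimplex.objEquiv (Δ[n₀].map θ α.1)).op b
          = B.map θ (B.map (stdSimplex.objEquiv α.1).op b)
        rw [stdSimplex.map_apply, Equiv.apply_symm_apply, op_comp,
          Quiver.Hom.op_unop, FunctorToTypes.map_comp_apply] }
  haveI := htf n₀
  have hsq : CommSq ux (boundary.{0} n₀).ι p (ub ≫ v) := by
    constructor
    ext m α
    exact P.hp (hbd α)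
  let lif := hsq.lift
  let idn : Δ[n₀].obj (op ⦋n₀⦌) := stdSimplex.objEquiv.symm (𝟙 _)
  let hx : X.obj (op ⦋n₀⦌) := lif.app (op ⦋n₀⦌) idn
  have hY : ∀ (x : SimplexCategory) (γ : x ⟶ ⦋n₀⦌),
      lif.app (op x) (stdSimplex.objEquiv.symm γ) = X.map γ.op hx := by
    intro x γ
    have hnatl := NatTrans.naturality_apply lif γ.op idn
    have harg : Δ[n₀].map γ.op idn = stdSimplex.objEquiv.symm γ := by
      rw [stdSimplex.map_apply]
      simp only [idn, Equiv.apply_symm_apply, Quiver.Hom.unop_op, Category.comp_id]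
    rw [← harg]
    exact hnatl
  have hbdc : ∀ (x : SimplexCategory) (γ : x ⟶ ⦋n₀⦌)
      (hns : ¬Function.Surjective ⇑γ.toOrderHom),
      X.map γ.op hx = P.l (B.map γ.op b) (P.mem_push b hlow x γ hns) := by
    intro x γ hns
    have hfl := congrFun (congrArg NatTrans.app hsq.fac_left) (op x)
    have := ConcreteCategory.congr_hom hfl (⟨stdSimplex.objEquiv.symm γ, hns⟩ : (∂Δ[n₀] : SSet).obj (op x))
    rw [← hY x γ]
    refine Eq.trans ?_ (this.trans (P.l_congr ?_ _ _))
    · rfl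
    · rw [Equiv.apply_symm_apply]
  have hpc : ∀ (x : SimplexCategory) (γ : x ⟶ ⦋n₀⦌),
      p.app (op x) (X.map γ.op hx) = v.app (op x) (B.map γ.op b) := by
    intro x γ
    have hfr := congrFun (congrArg NatTrans.app hsq.fac_right) (op x)
    have := ConcreteCategory.congr_hom hfr (stdSimplex.objEquiv.symm γ)
    rw [← hY x γ]
    refine this.trans (congrArg (v.app (op x)) ?_)
    show B.map _ b = B.map γ.op b
    rw [Equiv.apply_symm_apply]
  have hmemc : ∀ (x : SimplexCategory) (γ : x ⟶ ⦋n₀⦌) (hmem : B.map γ.op b ∈ P.S (op x)),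
      X.map γ.op hx = P.l _ hmem := by
    intro x γ hmem
    have hns : ¬Function.Surjective ⇑γ.toOrderHom :=
      fun hs => P.not_mem_push hb x γ hs hmem
    exact hbdc x γ hns
  have hW : ∀ (x : SimplexCategory) (γ γ' : x ⟶ ⦋n₀⦌),
      B.map γ.op b = B.map γ'.op b → X.map γ.op hx = X.map γ'.op hx := by
    intro x γ γ' he
    by_cases hmem : B.map γ.op b ∈ P.S (op x)
    · rw [hmemc x γ hmem, hmemc x γ' (he ▸ hmem)]
      exact P.l_congr he _ _
    · have hsγ : Function.Surjective ⇑γ.toOrderHom := by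
        by_contra hns
        exact hmem (P.mem_push b hlow x γ hns)
      have hsγ' : Function.Surjective ⇑γ'.toOrderHom := by
        by_contra hns
        rw [he] at hmem
        exact hmem (P.mem_push b hlow x γ' hns)
      rw [P.push_inj hb hlow hsγ hsγ' he]
  -- the extended partial lift
  let S' : ∀ m : SimplexCategoryᵒᵖ, Set (B.obj m) := fun m =>
    P.S m ∪ {z | ∃ γ : m.unop ⟶ ⦋n₀⦌, z = B.map γ.op b}
  have hres : ∀ {m} {z : B.obj m}, z ∈ S' m → z ∉ P.S m →
      ∃ γ : m.unop ⟶ ⦋n₀⦌, z = B.map γ.op b := fun hz h => (hz : _ ∨ _).resolve_left h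
  let l' : ∀ {m} (z : B.obj m), z ∈ S' m → X.obj m := fun {m} z hz =>
    if h : z ∈ P.S m then P.l z h
    else X.map (Classical.choose (hres hz h)).op hx
  have l'_mem : ∀ {m} (z : B.obj m) (hz : z ∈ S' m) (h : z ∈ P.S m), l' z hz = P.l z h :=
    fun z hz h => dif_pos h
  have l'_push : ∀ {m : SimplexCategoryᵒᵖ} (γ : m.unop ⟶ ⦋n₀⦌)
      (hz : B.map γ.op b ∈ S' m), l' (B.map γ.op b) hz = X.map γ.op hx := by
    intro m γ hz
    by_cases h : B.map γ.op b ∈ P.S m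
    · rw [l'_mem _ hz h]
      exact (hmemc m.unop γ h).symm
    · show dite _ _ _ = _
      rw [dif_neg h]
      exact hW m.unop _ γ (Classical.choose_spec (hres hz h)).symm
  have l'_congr : ∀ {m} {z z' : B.obj m} (_ : z = z') (hz : z ∈ S' m) (hz' : z' ∈ S' m),
      l' z hz = l' z' hz' := by
    intro m z z' e hz hz'
    subst e
    rfl
  let P' : PartialLift f p u v :=
    { S := S'
      closed := by
        rintro m m' θ z (hz | ⟨γ, rfl⟩)
        · exact Or.inl (P.closed θ hz)
        · refine Or.inr ⟨θ.unop ≫ γ, ?_⟩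
          rw [op_comp, Quiver.Hom.op_unop, FunctorToTypes.map_comp_apply]
      hf := fun a => Or.inl (P.hf a)
      l := l'
      hnat := by
        intro m m' θ z hz
        rcases hz with h | ⟨γ, rfl⟩
        · exact (l'_mem _ (Or.inl (P.closed θ h)) (P.closed θ h)).trans
            ((P.hnat θ h).trans (congrArg (X.map θ) (l'_mem z (Or.inl h) h).symm))
        · have e : B.map θ (B.map γ.op b) = B.map (θ.unop ≫ γ).op b := by
            rw [op_comp, Quiver.Hom.op_unop, FunctorToTypes.map_comp_apply]
          have hzl : B.map θ (B.map γ.op b) ∈ S' m' := Or.inr ⟨θ.unop ≫ γ, e⟩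
          refine ((l'_congr e hzl (Or.inr ⟨θ.unop ≫ γ, rfl⟩)).trans
            (l'_push (θ.unop ≫ γ) (Or.inr ⟨θ.unop ≫ γ, rfl⟩))).trans ?_
          rw [op_comp, Quiver.Hom.op_unop]
          rw [FunctorToTypes.map_comp_apply]
          exact congrArg (X.map θ) (l'_push γ (Or.inr ⟨γ, rfl⟩)).symm
      hu := fun a => (l'_mem _ (Or.inl (P.hf a)) (P.hf a)).trans (P.hu a)
      hp := by
        intro m z hz
        rcases hz with h | ⟨γ, rfl⟩
        · exact (congrArg (p.app m) (l'_mem z (Or.inl h) h)).trans (P.hp h)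
        · exact (congrArg (p.app m) (l'_push γ (Or.inr ⟨γ, rfl⟩))).trans (hpc m.unop γ) }
  have hle : P ≤ P' := ⟨fun m z hz => Or.inl hz, fun m z hz => l'_mem z (Or.inl hz) hz⟩
  obtain ⟨hsub, -⟩ := hmax hle
  apply hb
  apply hsub (op ⦋n₀⦌)
  exact Or.inr ⟨𝟙 _, by simp⟩

end PartialLift

/-- The hard direction: a monomorphism has the LLP against maps with the RLP
against boundary inclusions. -/
lemma hasLiftingProperty_of_mono {f : A ⟶ B} {p : X ⟶ Y} (hf : Mono f)
    (htf : ∀ n : ℕ, HasLiftingProperty (boundary.{0} n).ι p) :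
    HasLiftingProperty f p := by
  constructor
  intro u v sq
  obtain ⟨P, hP⟩ := PartialLift.exists_max hf sq.w
  have htot := PartialLift.total_of_max htf hP
  constructor
  constructor
  refine ⟨{ app := fun m => ↾fun z => P.l z (htot m z), naturality := ?_ }, ?_, ?_⟩
  · intro m m' θ
    ext z
    exact (PartialLift.l_congr P rfl _ _).trans (P.hnat θ (htot m z))
  · ext m a
    exact P.hu a
  · ext m z
    exact P.hp (htot m z)

/-- The "cofree" simplicial set on a set `S` relative to a fixed object `c`:
its `m`-simplices are `S`-valued functions on `c ⟶ m`. -/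
@[simps]
def cofree (c : SimplexCategory) (S : Type) : SSet.{0} where
  obj m := (c ⟶ m.unop) → S
  map θ := ↾fun g φ => g (φ ≫ θ.unop)
  map_id m := by ext g φ; simp
  map_comp θ θ' := by ext g φ; simp

/-- The terminal simplicial set. -/
def pt : SSet.{0} where
  obj _ := PUnit
  map _ := ↾id

/-- The projection from the cofree simplicial set to the point. -/
def cofreeProj (c : SimplexCategory) (S : Type) : cofree c S ⟶ pt where
  app _ := ↾fun _ => PUnit.unit

/-- The projection from the cofree simplicial set is a trivial fibration. -/
lemma cofreeProj_trivialFibration (c : SimplexCategory) (S : Type) [Inhabited S] (n : ℕ) :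
    HasLiftingProperty (boundary.{0} n).ι (cofreeProj c S) := by
  classical
  constructor
  intro w v sq
  constructor
  constructor
  let E : Δ[n].obj (op c) → S := fun ψ =>
    if h : Function.Surjective ⇑(stdSimplex.asOrderHom ψ) then default
    else w.app (op c) ⟨ψ, h⟩ (𝟙 c)
  have hmapmap : ∀ {m m' : SimplexCategoryᵒᵖ} (θ : m ⟶ m') (α : Δ[n].obj m)
      (φ : c ⟶ m'.unop), Δ[n].map (φ ≫ θ.unop).op α = Δ[n].map φ.op (Δ[n].map θ α) := by
    intro m m' θ α φ
    rw [op_comp, Quiver.Hom.op_unop, FunctorToTypes.map_comp_apply]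
  refine ⟨{ app := fun m => ↾fun α => fun φ => E (Δ[n].map φ.op α), naturality := ?_ }, ?_, ?_⟩
  · intro m m' θ
    ext α
    funext φ
    show E (Δ[n].map φ.op (Δ[n].map θ α)) = E (Δ[n].map (φ ≫ θ.unop).op α)
    rw [hmapmap]
  · apply SSet.hom_ext
    intro m
    ext β
    funext φ
    have hns : ¬ Function.Surjective ⇑(stdSimplex.asOrderHom (Δ[n].map φ.op β.1)) := by
      intro hs
      apply β.2
      have : ⇑(stdSimplex.asOrderHom (Δ[n].map φ.op β.1))
          = ⇑(stdSimplex.asOrderHom β.1) ∘ ⇑(φ.toOrderHom) := rfl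
      rw [this] at hs
      exact Function.Surjective.of_comp hs
    show E (Δ[n].map φ.op β.1) = w.app m β φ
    have : E (Δ[n].map φ.op β.1) = w.app (op c) ⟨Δ[n].map φ.op β.1, hns⟩ (𝟙 c) := dif_neg hns
    rw [this]
    have hnat := NatTrans.naturality_apply w φ.op β
    have : w.app (op c) ((∂Δ[n] : SSet).map φ.op β) = (cofree c S).map φ.op (w.app m β) := hnat
    rw [show (⟨Δ[n].map φ.op β.1, hns⟩ : (∂Δ[n] : SSet).obj (op c)) = (∂Δ[n] : SSet).map φ.op β from rfl,
      this]
    show w.app m β (𝟙 c ≫ φ) = w.app m β φ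
    rw [Category.id_comp]
  · apply SSet.hom_ext
    intro m
    ext z
    exact Subsingleton.elim (α := PUnit) _ _

/-- The classifying map into the cofree simplicial set. -/
@[simps]
def classify (A : SSet.{0}) (m : SimplexCategoryᵒᵖ) :
    A ⟶ cofree m.unop (Option (A.obj m)) where
  app m' := ↾fun a' φ => some (A.map φ.op a')
  naturality := by
    intro m' m'' θ
    ext a'
    funext φ
    show some (A.map φ.op (A.map θ a')) = some (A.map (φ ≫ θ.unop).op a')
    rw [op_comp, Quiver.Hom.op_unop, FunctorToTypes.map_comp_apply]

/-- The easy direction: LLP against all trivial fibrations implies mono. -/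
lemma mono_of_llp {f : A ⟶ B}
    (h : ∀ ⦃X Y : SSet.{0}⦄ (p : X ⟶ Y),
      (∀ n : ℕ, HasLiftingProperty (boundary.{0} n).ι p) → HasLiftingProperty f p) :
    Mono f := by
  have hinj : ∀ m : SimplexCategoryᵒᵖ, Function.Injective (f.app m) := by
    intro m a a' haa
    haveI := h (cofreeProj m.unop (Option (A.obj m)))
      (fun n => cofreeProj_trivialFibration m.unop (Option (A.obj m)) n)
    have sq : CommSq (classify A m) f (cofreeProj m.unop (Option (A.obj m)))
        { app := fun _ => ↾fun _ => PUnit.unit } := by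
      constructor
      apply SSet.hom_ext
      intro m'
      ext a''
      exact Subsingleton.elim (α := PUnit) _ _
    have hfac := congrFun (congrArg NatTrans.app sq.fac_left) m
    have e1 : sq.lift.app m (f.app m a) = (classify A m).app m a := ConcreteCategory.congr_hom hfac a
    have e2 : sq.lift.app m (f.app m a') = (classify A m).app m a' := ConcreteCategory.congr_hom hfac a'
    rw [haa, e2] at e1
    have := congrFun e1 (𝟙 m.unop)
    change some (A.map (𝟙 m.unop).op a') = some (A.map (𝟙 m.unop).op a) at this
    rw [op_id, FunctorToTypes.map_id_apply, FunctorToTypes.map_id_apply] at this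
    exact Option.some_injective _ this.symm
  haveI : ∀ m, Mono (f.app m) := fun m => (CategoryTheory.mono_iff_injective _).2 (hinj m)
  exact NatTrans.mono_of_mono_app f

end LLPAux

/-- A morphism of simplicial sets has the left lifting property with respect to every
trivial fibration if and only if it is a monomorphism: the cofibrations of the Kan–Quillen
model structure are exactly the monomorphisms. -/
theorem llp_trivialFibrations_iff_mono {A B : SSet.{0}} (f : A ⟶ B) :
    (∀ ⦃X Y : SSet.{0}⦄ (p : X ⟶ Y), TrivialFibration p → HasLiftingProperty f p) ↔ Mono f := by
  constructor
  · intro h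
    exact LLPAux.mono_of_llp h
  · intro hf X Y p hp
    exact LLPAux.hasLiftingProperty_of_mono hf hp
end

section
/- If i : A ⟶ B and j : X ⟶ Y are monomorphisms of simplicial sets, then their pushout-product i □ j : (A × Y) ⊔_{A × X} (B × X) ⟶ B × Y is a monomorphism. -/
open CategoryTheory CategoryTheory.Limits MonoidalCategory Simplicial SSet

/-- The pushout-product `i □ j` of two morphisms of simplicial sets: the canonical map
`(A × Y) ⊔_{A × X} (B × X) ⟶ B × Y` induced by `i × id_Y` and `id_B × j`. -/
noncomputable def pushoutProduct {A B X Y : SSet.{0}} (i : A ⟶ B) (j : X ⟶ Y) :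
    pushout (A ◁ j) (i ▷ X) ⟶ B ⊗ Y :=
  pushout.desc (i ▷ Y) (B ◁ j) (whisker_exchange i j).symm

/-- Key lemma in types: a map out of a pushout of injections is injective provided the
two "legs" are injective and the square is moreover a pullback (elementwise). -/
lemma pushout_desc_injective_aux {S X₁ X₂ T : Type} {f : S ⟶ X₁} {g : S ⟶ X₂}
    [Mono f] {c : PushoutCocone f g} (hc : IsColimit c) {d : c.pt ⟶ T}
    (hu : Function.Injective (c.inl ≫ d)) (hv : Function.Injective (c.inr ≫ d))
    (hpb : ∀ x₁ x₂, d (c.inl x₁) = d (c.inr x₂) → ∃ s, f s = x₁ ∧ g s = x₂) :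
    Function.Injective d := by
  -- every element of `c.pt` comes from `c.inl` or `c.inr`
  have hsurj : ∀ z : c.pt, (∃ x₁, c.inl x₁ = z) ∨ (∃ x₂, c.inr x₂ = z) := by
    intro z
    let e := IsColimit.coconePointUniqueUpToIso (Types.Pushout.isColimitCocone f g) hc
    obtain ⟨w, hw⟩ : ∃ w : Types.Pushout f g, e.hom w = z :=
      ⟨e.inv z, ConcreteCategory.congr_hom e.inv_hom_id z⟩
    obtain ⟨x₁ | x₂⟩ := w
    · left
      refine ⟨x₁, ?_⟩
      rw [← hw]
      exact (ConcreteCategory.congr_hom (IsColimit.comp_coconePointUniqueUpToIso_hom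
        (Types.Pushout.isColimitCocone f g) hc WalkingSpan.left) x₁).symm
    · right
      refine ⟨x₂, ?_⟩
      rw [← hw]
      exact (ConcreteCategory.congr_hom (IsColimit.comp_coconePointUniqueUpToIso_hom
        (Types.Pushout.isColimitCocone f g) hc WalkingSpan.right) x₂).symm
  intro z z' h
  obtain ⟨x₁, rfl⟩ | ⟨x₂, rfl⟩ := hsurj z <;> obtain ⟨y₁, rfl⟩ | ⟨y₂, rfl⟩ := hsurj z'
  · rw [hu h]
  · obtain ⟨s, rfl, rfl⟩ := hpb _ _ h
    exact ConcreteCategory.congr_hom c.condition s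
  · obtain ⟨s, rfl, rfl⟩ := hpb _ _ h.symm
    exact (ConcreteCategory.congr_hom c.condition s).symm
  · rw [hv h]

/-- If `i` and `j` are monomorphisms of simplicial sets, then their pushout-product
`i □ j : (A × Y) ⊔_{A × X} (B × X) ⟶ B × Y` is a monomorphism. -/
theorem pushoutProduct_mono {A B X Y : SSet.{0}} (i : A ⟶ B) (j : X ⟶ Y)
    [Mono i] [Mono j] : Mono (pushoutProduct i j) := by
  have H : ∀ k, Mono ((pushoutProduct i j).app k) := by
    intro k
    rw [CategoryTheory.mono_iff_injective]
    let G := (evaluation SimplexCategoryᵒᵖ (Type 0)).obj k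
    have hc : IsColimit (PushoutCocone.mk ((pushout.inl (A ◁ j) (i ▷ X)).app k)
        ((pushout.inr (A ◁ j) (i ▷ X)).app k) (by
          rw [← NatTrans.comp_app, ← NatTrans.comp_app, pushout.condition])) := by
      have := isColimitOfHasPushoutOfPreservesColimit G (A ◁ j) (i ▷ X)
      exact this
    have hinj : ∀ {U V : SSet.{0}} (f : U ⟶ V) [Mono f], Function.Injective (f.app k) := by
      intro U V f hf
      rw [← CategoryTheory.mono_iff_injective]
      infer_instance
    have h1 : (pushout.inl (A ◁ j) (i ▷ X)).app k ≫ (pushoutProduct i j).app k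
        = (i ▷ Y).app k := by
      rw [← NatTrans.comp_app]; exact congr_arg (fun f => NatTrans.app f k) (pushout.inl_desc (i ▷ Y) (B ◁ j) (whisker_exchange i j))
    have h2 : (pushout.inr (A ◁ j) (i ▷ X)).app k ≫ (pushoutProduct i j).app k
        = (B ◁ j).app k := by
      rw [← NatTrans.comp_app]; exact congr_arg (fun f => NatTrans.app f k) (pushout.inr_desc (i ▷ Y) (B ◁ j) (whisker_exchange i j))
    have hm : Mono ((A ◁ j).app k) := by
      rw [CategoryTheory.mono_iff_injective]
      intro p q hpq
      simp only [whiskerLeft_app_apply] at hpq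
      have ha := congr_arg _root_.Prod.fst hpq
      have hb := congr_arg _root_.Prod.snd hpq
      exact Prod.ext ha (hinj j hb)
    refine pushout_desc_injective_aux hc (d := (pushoutProduct i j).app k) ?_ ?_ ?_
    · show Function.Injective ((pushout.inl (A ◁ j) (i ▷ X)).app k ≫ (pushoutProduct i j).app k)
      rw [h1]
      intro p q hpq
      simp only [whiskerRight_app_apply] at hpq
      have ha := congr_arg _root_.Prod.fst hpq
      have hb := congr_arg _root_.Prod.snd hpq
      exact Prod.ext (hinj i ha) hb
    · show Function.Injective ((pushout.inr (A ◁ j) (i ▷ X)).app k ≫ (pushoutProduct i j).app k)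
      rw [h2]
      intro p q hpq
      simp only [whiskerLeft_app_apply] at hpq
      have ha := congr_arg _root_.Prod.fst hpq
      have hb := congr_arg _root_.Prod.snd hpq
      exact Prod.ext ha (hinj j hb)
    · intro x₁ x₂ h
      replace h : (i ▷ Y).app k x₁ = (B ◁ j).app k x₂ := by
        rw [← ConcreteCategory.congr_hom h1 x₁, ← ConcreteCategory.congr_hom h2 x₂]; exact h
      simp only [whiskerRight_app_apply, whiskerLeft_app_apply] at h
      have hfst := congr_arg _root_.Prod.fst h
      have hsnd := congr_arg _root_.Prod.snd h
      refine ⟨(x₁.1, x₂.2), ?_, ?_⟩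
      · simp only [whiskerLeft_app_apply]
        exact Prod.ext rfl hsnd.symm
      · simp only [whiskerRight_app_apply]
        exact Prod.ext hfst rfl
  exact NatTrans.mono_of_mono_app _
end

section
/- Let i : A ⟶ B be a monomorphism of simplicial sets such that B is a Kan complex and i has the left lifting property with respect to every Kan fibration whose source and target are Kan complexes. Then i is an anodyne extension. -/
open CategoryTheory CategoryTheory.Limits Simplicial SSet

/-- A Kan fibration: a morphism with the right lifting property with respect to all
horn inclusions `Λ[n, k] → Δ[n]`. -/
def KanFibration {X Y : SSet.{0}} (p : X ⟶ Y) : Prop :=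
  ∀ (n : ℕ) (k : Fin (n + 1)), HasLiftingProperty (Λ[n, k].ι) p

/-- An anodyne extension: a morphism with the left lifting property with respect to all
Kan fibrations. -/
def Anodyne {A B : SSet.{0}} (i : A ⟶ B) : Prop :=
  ∀ ⦃X Y : SSet.{0}⦄ (p : X ⟶ Y), KanFibration p → HasLiftingProperty i p

/-- The Kan complex condition as Mathlib (Dec 2024) stated it: every horn `Λ[n, i] ⟶ S`,
for every `n` (including `n = 0`), extends along the horn inclusion. -/
def OldKanComplex (S : SSet.{0}) : Prop :=
  ∀ ⦃n : ℕ⦄ ⦃i : Fin (n + 1)⦄ (σ₀ : (Λ[n, i] : SSet.{0}) ⟶ S),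
    ∃ σ : Δ[n] ⟶ S, σ₀ = Λ[n, i].ι ≫ σ

/-- Kan fibrations are stable under base change. -/
lemma kanFibration_pullback_snd {X Y B : SSet.{0}} (p : X ⟶ Y) (g : B ⟶ Y)
    (hp : KanFibration p) : KanFibration (pullback.snd p g) := by
  intro n k
  constructor
  intro t b sq
  haveI := hp n k
  have sq' : CommSq (t ≫ pullback.fst p g) (Λ[n, k].ι) p (b ≫ g) := by
    constructor
    rw [Category.assoc, pullback.condition, ← Category.assoc, sq.w, Category.assoc]
  exact ⟨⟨⟨pullback.lift sq'.lift b sq'.fac_right, by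
      apply pullback.hom_ext
      · rw [Category.assoc, pullback.lift_fst, sq'.fac_left]
      · rw [Category.assoc, pullback.lift_snd]; exact sq.w.symm, by exact pullback.lift_snd _ _ _⟩⟩⟩

/-- The source of a Kan fibration whose target is a Kan complex is a Kan complex. -/
lemma kanComplex_of_kanFibration {X B : SSet.{0}} (p : X ⟶ B) (hp : KanFibration p)
    (hB : OldKanComplex B) : OldKanComplex X := by
  intro n k σ₀
  obtain ⟨b, hb⟩ := hB (σ₀ ≫ p)
  haveI := hp n k
  have sq : CommSq σ₀ (Λ[n, k].ι) p b := ⟨hb⟩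
  exact ⟨sq.lift, sq.fac_left.symm⟩

/-- Let `i : A ⟶ B` be a monomorphism of simplicial sets such that `B` is a Kan complex and
`i` has the left lifting property with respect to every Kan fibration whose source and
target are Kan complexes. Then `i` is an anodyne extension. -/
theorem anodyne_of_llp_kanFibrations_between_kanComplexes {A B : SSet.{0}} (i : A ⟶ B)
    [Mono i] (hB : OldKanComplex B)
    (h : ∀ ⦃X Y : SSet.{0}⦄ (p : X ⟶ Y), KanFibration p → OldKanComplex X → OldKanComplex Y →
      HasLiftingProperty i p) :
    Anodyne i := by
  intro X Y p hp
  constructor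
  intro f g sq
  -- pull back `p` along `g`
  have hsnd : KanFibration (pullback.snd p g) := kanFibration_pullback_snd p g hp
  have hP : OldKanComplex (pullback p g) :=
    kanComplex_of_kanFibration (pullback.snd p g) hsnd hB
  haveI := h (pullback.snd p g) hsnd hP hB
  have sq' : CommSq (pullback.lift f i sq.w) i (pullback.snd p g) (𝟙 B) := by
    constructor
    rw [Category.comp_id]; exact pullback.lift_snd _ _ _
  refine ⟨⟨⟨sq'.lift ≫ pullback.fst p g, ?_, ?_⟩⟩⟩
  · rw [← Category.assoc, sq'.fac_left]; exact pullback.lift_fst _ _ _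
  · rw [Category.assoc, pullback.condition, ← Category.assoc, sq'.fac_right]; simp
end

section
/- Let X be a simplicial set, σ : [n] → [m] an epimorphism in the simplex category, and x ∈ X_n. Then x is σ-degenerate if and only if for every monomorphism i : [k] → [n] in the simplex category such that the composite σ ∘ i is not injective, the cell X(i)(x) ∈ X_k is degenerate. -/
open CategoryTheory CategoryTheory.Limits Simplicial SSet Opposite

/-- A cell `x ∈ X_n` is `σ`-degenerate, for `σ : [n] → [m]` an epimorphism of the simplex
category, if `x = X(σ)(y)` for some `y ∈ X_m`. -/
def IsSigmaDegenerate (X : SSet.{0}) {n m : SimplexCategory} (σ : n ⟶ m)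
    (x : X.obj (op n)) : Prop :=
  ∃ y : X.obj (op m), x = X.map σ.op y

/-- A cell is degenerate if it is `σ`-degenerate for some non-identity epimorphism `σ`
(in the simplex category an epimorphism is an identity iff it is an isomorphism). -/
def IsDegenerate (X : SSet.{0}) {n : SimplexCategory} (x : X.obj (op n)) : Prop :=
  ∃ (m : SimplexCategory) (σ : n ⟶ m), Epi σ ∧ ¬IsIso σ ∧ IsSigmaDegenerate X σ x

namespace SigmaDegAux

open SimplexCategory

lemma coe_comp' {a b c : SimplexCategory} (f : a ⟶ b) (g : b ⟶ c) :
    ⇑(f ≫ g).toOrderHom = ⇑g.toOrderHom ∘ ⇑f.toOrderHom := by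
  ext x; simp

lemma inj_of_comp {a b c : SimplexCategory} (f : a ⟶ b) (g : b ⟶ c)
    (h : Function.Injective ⇑(f ≫ g).toOrderHom) : Function.Injective ⇑f.toOrderHom := by
  rw [coe_comp'] at h
  exact h.of_comp

lemma inj_comp {a b c : SimplexCategory} (f : a ⟶ b) (g : b ⟶ c)
    (hf : Function.Injective ⇑f.toOrderHom) (hg : Function.Injective ⇑g.toOrderHom) :
    Function.Injective ⇑(f ≫ g).toOrderHom := by
  rw [coe_comp']
  exact hg.comp hf

lemma inj_from_zero {m : SimplexCategory} (f : SimplexCategory.mk 0 ⟶ m) :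
    Function.Injective ⇑f.toOrderHom := by
  intro a b _
  have ha : (a : ℕ) < 1 := a.isLt
  have hb : (b : ℕ) < 1 := b.isLt
  apply Fin.ext
  omega

lemma sigma_not_inj {N : ℕ} (j : Fin (N + 1)) :
    ¬Function.Injective ⇑(SimplexCategory.σ j).toOrderHom := by
  intro h
  have h1 : (SimplexCategory.σ j).toOrderHom j.castSucc
      = (SimplexCategory.σ j).toOrderHom j.succ := by
    show j.predAbove j.castSucc = j.predAbove j.succ
    simp
  exact (Fin.castSucc_lt_succ : j.castSucc < j.succ).ne (h h1)

/-- From a degenerate cell in dimension `N+1`, extract an elementary degeneracy. -/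
lemma exists_sigma (X : SSet.{0}) {N : ℕ} (x : X.obj (op (SimplexCategory.mk (N + 1))))
    (hx : IsDegenerate X x) :
    ∃ (l : Fin (N + 1)) (z : X.obj (op (SimplexCategory.mk N))),
      x = X.map (SimplexCategory.σ l).op z := by
  obtain ⟨p, τ, hepi, hniso, y, hxy⟩ := hx
  have hninj : ¬Function.Injective ⇑τ.toOrderHom := by
    intro hinj
    exact hniso (SimplexCategory.isIso_of_bijective
      ⟨hinj, SimplexCategory.epi_iff_surjective.mp hepi⟩)
  obtain ⟨l, θ', hfac⟩ := SimplexCategory.eq_σ_comp_of_not_injective τ hninj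
  refine ⟨l, X.map θ'.op y, ?_⟩
  rw [hxy, hfac, op_comp, FunctorToTypes.map_comp_apply]

/-- The shared continuation step in the proof of `lemA`. -/
lemma step (X : SSet.{0}) {N : ℕ}
    (ih : ∀ (j' : Fin (N + 1)) (z : X.obj (op (SimplexCategory.mk (N + 1)))),
      (∀ (k : SimplexCategory) (i : k ⟶ SimplexCategory.mk (N + 1)), Mono i →
        ¬Function.Injective ⇑(i ≫ SimplexCategory.σ j').toOrderHom →
        IsDegenerate X (X.map i.op z)) →
      IsSigmaDegenerate X (SimplexCategory.σ j') z)
    (j l : Fin (N + 2)) (s : Fin (N + 3)) (j' : Fin (N + 1))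
    (g : SimplexCategory.mk (N + 1) ⟶ SimplexCategory.mk N)
    (hsec : SimplexCategory.δ s ≫ SimplexCategory.σ l = 𝟙 _)
    (key1 : SimplexCategory.δ s ≫ SimplexCategory.σ j
      = SimplexCategory.σ j' ≫ SimplexCategory.δ l)
    (key2 : SimplexCategory.σ l ≫ SimplexCategory.σ j' = SimplexCategory.σ j ≫ g)
    (x : X.obj (op (SimplexCategory.mk (N + 2))))
    (z₀ : X.obj (op (SimplexCategory.mk (N + 1))))
    (hx : x = X.map (SimplexCategory.σ l).op z₀)
    (H : ∀ (k : SimplexCategory) (i : k ⟶ SimplexCategory.mk (N + 2)), Mono i →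
      ¬Function.Injective ⇑(i ≫ SimplexCategory.σ j).toOrderHom →
      IsDegenerate X (X.map i.op x)) :
    IsSigmaDegenerate X (SimplexCategory.σ j) x := by
  set z : X.obj (op (SimplexCategory.mk (N + 1))) := X.map (SimplexCategory.δ s).op x with hzdef
  have hz0 : z = z₀ := by
    rw [hzdef, hx, ← FunctorToTypes.map_comp_apply, ← op_comp, hsec, op_id,
      FunctorToTypes.map_id_apply]
  have hx' : x = X.map (SimplexCategory.σ l).op z := by rw [hz0, hx]
  obtain ⟨w, hw⟩ := ih j' z (by
    intro k i' hmono hninj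
    have e : X.map i'.op z = X.map ((i' ≫ SimplexCategory.δ s).op) x := by
      rw [hzdef, op_comp, FunctorToTypes.map_comp_apply]
    rw [e]
    haveI := hmono
    refine H k (i' ≫ SimplexCategory.δ s) (mono_comp _ _) ?_
    intro hinj
    apply hninj
    have e2 : (i' ≫ SimplexCategory.δ s) ≫ SimplexCategory.σ j
        = (i' ≫ SimplexCategory.σ j') ≫ SimplexCategory.δ l := by
      rw [Category.assoc, key1, ← Category.assoc]
    rw [e2] at hinj
    exact inj_of_comp _ _ hinj)
  refine ⟨X.map g.op w, ?_⟩
  rw [hx', hw, ← FunctorToTypes.map_comp_apply, ← FunctorToTypes.map_comp_apply,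
    ← op_comp, ← op_comp, key2]

/-- Core lemma: the theorem for elementary degeneracy maps `σ j`. -/
lemma lemA (X : SSet.{0}) : ∀ (N : ℕ) (j : Fin (N + 1))
    (x : X.obj (op (SimplexCategory.mk (N + 1)))),
    (∀ (k : SimplexCategory) (i : k ⟶ SimplexCategory.mk (N + 1)), Mono i →
      ¬Function.Injective ⇑(i ≫ SimplexCategory.σ j).toOrderHom →
      IsDegenerate X (X.map i.op x)) →
    IsSigmaDegenerate X (SimplexCategory.σ j) x := by
  intro N
  induction N with
  | zero =>
    intro j x H
    have hxdeg : IsDegenerate X x := by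
      have h := H _ (𝟙 _) inferInstance
        (by rw [Category.id_comp]; exact sigma_not_inj j)
      rwa [op_id, FunctorToTypes.map_id_apply] at h
    obtain ⟨l, z, hz⟩ := exists_sigma X x hxdeg
    have : l = j := by
      have h1 : (l : ℕ) < 1 := l.isLt
      have h2 : (j : ℕ) < 1 := j.isLt
      apply Fin.ext
      omega
    exact ⟨z, by rw [← this]; exact hz⟩
  | succ N ih =>
    intro j x H
    have hxdeg : IsDegenerate X x := by
      have h := H _ (𝟙 _) inferInstance
        (by rw [Category.id_comp]; exact sigma_not_inj j)
      rwa [op_id, FunctorToTypes.map_id_apply] at h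
    obtain ⟨l, z₀, hz⟩ := exists_sigma X x hxdeg
    rcases lt_trichotomy l j with hlj | heq | hjl
    · -- l < j
      have hj0 : j ≠ 0 := by
        intro h; rw [h] at hlj; exact Fin.not_lt_zero l hlj
      have hllast : l ≠ Fin.last _ := Fin.ne_last_of_lt hlj
      set j' := j.pred hj0 with hj'
      set l₀ := l.castPred hllast with hl₀
      have key1 : SimplexCategory.δ l.castSucc ≫ SimplexCategory.σ j
          = SimplexCategory.σ j' ≫ SimplexCategory.δ l := by
        have := SimplexCategory.δ_comp_σ_of_le (n := N) (i := l) (j := j')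
          (by rw [Fin.le_def]; simp [hj']; omega)
        rwa [Fin.succ_pred] at this
      have key2 : SimplexCategory.σ l ≫ SimplexCategory.σ j'
          = SimplexCategory.σ j ≫ SimplexCategory.σ l₀ := by
        have := SimplexCategory.σ_comp_σ (n := N) (i := l₀) (j := j')
          (by rw [Fin.le_def]; simp [hj', hl₀]; omega)
        rwa [Fin.castSucc_castPred, Fin.succ_pred] at this
      exact step X ih j l l.castSucc j' (SimplexCategory.σ l₀)
        SimplexCategory.δ_comp_σ_self key1 key2 x z₀ hz H
    · exact ⟨z₀, by rw [← heq]; exact hz⟩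
    · -- j < l
      have hl0 : l ≠ 0 := by
        intro h; rw [h] at hjl; exact Fin.not_lt_zero j hjl
      have hjlast : j ≠ Fin.last _ := Fin.ne_last_of_lt hjl
      set j' := j.castPred hjlast with hj'
      set l₁ := l.pred hl0 with hl₁
      have key1 : SimplexCategory.δ l.succ ≫ SimplexCategory.σ j
          = SimplexCategory.σ j' ≫ SimplexCategory.δ l := by
        have := SimplexCategory.δ_comp_σ_of_gt (n := N) (i := l) (j := j')
          (by rw [Fin.lt_def]; simp [hj']; omega)
        rwa [Fin.castSucc_castPred] at this
      have key2 : SimplexCategory.σ l ≫ SimplexCategory.σ j'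
          = SimplexCategory.σ j ≫ SimplexCategory.σ l₁ := by
        have := SimplexCategory.σ_comp_σ (n := N) (i := j') (j := l₁)
          (by rw [Fin.le_def]; simp [hj', hl₁]; omega)
        rw [Fin.castSucc_castPred, Fin.succ_pred] at this
        exact this.symm
      exact step X ih j l l.succ j' (SimplexCategory.σ l₁)
        SimplexCategory.δ_comp_σ_succ key1 key2 x z₀ hz H

/-- The backward implication of the main theorem, stated over `SimplexCategory.mk N`. -/
lemma main' (X : SSet.{0}) : ∀ (N : ℕ) (m : SimplexCategory)
    (σ : SimplexCategory.mk N ⟶ m) (hepi : Epi σ)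
    (x : X.obj (op (SimplexCategory.mk N))),
    (∀ (k : SimplexCategory) (i : k ⟶ SimplexCategory.mk N), Mono i →
      ¬Function.Injective ⇑(i ≫ σ).toOrderHom → IsDegenerate X (X.map i.op x)) →
    IsSigmaDegenerate X σ x := by
  intro N
  induction N with
  | zero =>
    intro m σ hepi x _
    have hinj : Function.Injective ⇑σ.toOrderHom := inj_from_zero σ
    haveI : IsIso σ := SimplexCategory.isIso_of_bijective
      ⟨hinj, SimplexCategory.epi_iff_surjective.mp hepi⟩
    refine ⟨X.map (inv σ).op x, ?_⟩
    rw [← FunctorToTypes.map_comp_apply, ← op_comp, IsIso.hom_inv_id, op_id,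
      FunctorToTypes.map_id_apply]
  | succ N ih =>
    intro m σ hepi x H
    by_cases hinj : Function.Injective ⇑σ.toOrderHom
    · haveI : IsIso σ := SimplexCategory.isIso_of_bijective
        ⟨hinj, SimplexCategory.epi_iff_surjective.mp hepi⟩
      refine ⟨X.map (inv σ).op x, ?_⟩
      rw [← FunctorToTypes.map_comp_apply, ← op_comp, IsIso.hom_inv_id, op_id,
        FunctorToTypes.map_id_apply]
    · obtain ⟨j, σ', hfac⟩ := SimplexCategory.eq_σ_comp_of_not_injective σ hinj
      have hepi' : Epi σ' := by
        rw [hfac] at hepi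
        exact epi_of_epi (SimplexCategory.σ j) σ'
      have hx : IsSigmaDegenerate X (SimplexCategory.σ j) x := by
        refine lemA X N j x ?_
        intro k i hm hninj
        refine H k i hm ?_
        rw [hfac]
        intro hI
        apply hninj
        rw [← Category.assoc] at hI
        exact inj_of_comp _ _ hI
      obtain ⟨x₁, hx₁⟩ := hx
      have hx₁' : x₁ = X.map (SimplexCategory.δ j.succ).op x := by
        rw [hx₁, ← FunctorToTypes.map_comp_apply, ← op_comp,
          SimplexCategory.δ_comp_σ_succ, op_id, FunctorToTypes.map_id_apply]
      obtain ⟨y, hy⟩ := ih m σ' hepi' x₁ (by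
        intro k i' hm hninj
        have e : X.map i'.op x₁ = X.map ((i' ≫ SimplexCategory.δ j.succ).op) x := by
          rw [hx₁', op_comp, FunctorToTypes.map_comp_apply]
        rw [e]
        haveI := hm
        refine H k (i' ≫ SimplexCategory.δ j.succ) (mono_comp _ _) ?_
        rw [hfac]
        have e2 : (i' ≫ SimplexCategory.δ j.succ) ≫ SimplexCategory.σ j ≫ σ' = i' ≫ σ' := by
          rw [Category.assoc, ← Category.assoc (SimplexCategory.δ j.succ),
            SimplexCategory.δ_comp_σ_succ, Category.id_comp]
        rw [e2]
        exact hninj)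
      refine ⟨y, ?_⟩
      rw [hx₁, hy, ← FunctorToTypes.map_comp_apply, ← op_comp, ← hfac]

end SigmaDegAux

/-- Let `X` be a simplicial set, `σ : [n] → [m]` an epimorphism in the simplex category and
`x ∈ X_n`. Then `x` is `σ`-degenerate if and only if for every monomorphism `i : [k] → [n]`
of the simplex category such that `σ ∘ i` is not injective, the cell `X(i)(x)` is
degenerate. -/
theorem isSigmaDegenerate_iff (X : SSet.{0}) {n m : SimplexCategory} (σ : n ⟶ m) [Epi σ]
    (x : X.obj (op n)) :
    IsSigmaDegenerate X σ x ↔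
      ∀ (k : SimplexCategory) (i : k ⟶ n), Mono i →
        ¬Function.Injective ⇑(i ≫ σ).toOrderHom → IsDegenerate X (X.map i.op x) := by
  constructor
  · rintro ⟨y, hxy⟩ k i hm hninj
    refine ⟨image (i ≫ σ), factorThruImage (i ≫ σ), inferInstance, ?_,
      ⟨X.map (image.ι (i ≫ σ)).op y, ?_⟩⟩
    · intro hiso
      apply hninj
      have h1 : Function.Injective ⇑(factorThruImage (i ≫ σ)).toOrderHom :=
        SimplexCategory.mono_iff_injective.mp inferInstance
      have h2 : Function.Injective ⇑(image.ι (i ≫ σ)).toOrderHom :=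
        SimplexCategory.mono_iff_injective.mp inferInstance
      rw [← image.fac (i ≫ σ)]
      exact SigmaDegAux.inj_comp _ _ h1 h2
    · rw [hxy, ← FunctorToTypes.map_comp_apply, ← FunctorToTypes.map_comp_apply,
        ← op_comp, ← op_comp, image.fac]
  · intro H
    exact SigmaDegAux.main' X n.len m σ inferInstance x H
end

section
/- Let σ : [n] → [m] and s : [n] → [k] be epimorphisms in the simplex category. If for every section d : [k] → [n] of s (i.e., s ∘ d = id) the composite σ ∘ d is injective, then there exists a unique morphism j : [m] → [k] in the simplex category such that s = j ∘ σ. -/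
open CategoryTheory SimplexCategory

lemma key_eq {n m k : SimplexCategory}
    (σ : n ⟶ m) (s : n ⟶ k) [Epi s]
    (h : ∀ d : k ⟶ n, d ≫ s = 𝟙 k → Function.Injective ⇑(d ≫ σ).toOrderHom)
    {x y : Fin (n.len + 1)} (hxy : x ≤ y)
    (hσ : σ.toOrderHom x = σ.toOrderHom y) :
    s.toOrderHom x = s.toOrderHom y := by
  set S := s.toOrderHom with hS
  by_contra hne
  have hlt : S x < S y := lt_of_le_of_ne (S.monotone hxy) hne
  have hyx : S y ≠ S x := fun e => hne e.symm
  have hsurj : Function.Surjective S := epi_iff_surjective.1 ‹Epi s›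
  -- minimal preimage
  have hne' : ∀ i : Fin (k.len + 1),
      ((Finset.univ.filter (fun z => S z = i))).Nonempty := by
    intro i
    obtain ⟨z, hz⟩ := hsurj i
    exact ⟨z, by simp [hz]⟩
  set p : Fin (k.len + 1) → Fin (n.len + 1) :=
    fun i => (Finset.univ.filter (fun z => S z = i)).min' (hne' i) with hp
  have hpS : ∀ i, S (p i) = i := by
    intro i
    have := Finset.min'_mem _ (hne' i)
    simpa using this
  have hpmin : ∀ i z, S z = i → p i ≤ z := by
    intro i z hz
    exact Finset.min'_le _ _ (by simp [hz])
  -- the section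
  set f : Fin (k.len + 1) → Fin (n.len + 1) :=
    fun i => if i = S x then x else if i = S y then y else p i with hf
  have hmono : Monotone f := by
    intro i j hij
    have aux : ∀ a b : Fin (n.len + 1), S a < S b → a < b := by
      intro a b hab
      by_contra hc
      exact absurd (S.monotone (not_lt.1 hc)) (not_le.2 hab)
    simp only [hf]
    by_cases hix : i = S x
    · by_cases hjx : j = S x
      · simp [hix, hjx]
      · by_cases hjy : j = S y
        · simp [hix, hjx, hjy, hxy, hyx]
        · simp only [hix, hjx, hjy, if_true, if_false, if_neg hjx]
          subst hix
          have : S x < j := lt_of_le_of_ne hij (Ne.symm hjx)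
          have : S x < S (p j) := by rwa [hpS]
          exact (aux _ _ this).le
    · by_cases hiy : i = S y
      · subst hiy
        by_cases hjx : j = S x
        · exact absurd (hij.trans_eq (hjx ▸ rfl)) (not_le.2 (hjx ▸ hlt))
        · by_cases hjy : j = S y
          · simp [hix, hjx, hjy]
          · simp only [hix, hjx, hjy, if_false]
            have : S y < j := lt_of_le_of_ne hij (Ne.symm hjy)
            have : S y < S (p j) := by rwa [hpS]
            exact (aux _ _ this).le
      · simp only [hix, hiy, if_false]
        by_cases hjx : j = S x
        · subst hjx
          have hi : i < S x := lt_of_le_of_ne hij hix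
          have : S (p i) < S x := by rwa [hpS]
          simp only [if_pos rfl]
          exact (aux _ _ this).le
        · by_cases hjy : j = S y
          · subst hjy
            have hi : i < S y := lt_of_le_of_ne hij hiy
            have : S (p i) < S y := by rwa [hpS]
            simp only [hjx, if_false, if_pos rfl]
            exact (aux _ _ this).le
          · simp only [hjx, hjy, if_false]
            -- p monotone
            by_contra hc
            have hc' : p j < p i := not_le.1 hc
            have : S (p j) ≤ S (p i) := S.monotone hc'.le
            rw [hpS, hpS] at this
            have : i = j := le_antisymm hij this
            subst this
            exact hc le_rfl
  set d : k ⟶ n := SimplexCategory.Hom.mk ⟨f, hmono⟩ with hd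
  have hsec : d ≫ s = 𝟙 k := by
    apply SimplexCategory.Hom.ext
    ext i
    have hSf : S (f i) = i := by
      simp only [hf]
      by_cases hix : i = S x
      · simp [hix]
      · by_cases hiy : i = S y
        · simp [hix, hiy, hyx]
        · simp [hix, hiy, hpS]
    exact congrArg Fin.val hSf
  have hinj := h d hsec
  have h1 : (d ≫ σ).toOrderHom (S x) = (d ≫ σ).toOrderHom (S y) := by
    show σ.toOrderHom (f (S x)) = σ.toOrderHom (f (S y))
    have hfx : f (S x) = x := by simp [hf]
    have hfy : f (S y) = y := by simp [hf, hyx]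
    rw [hfx, hfy, hσ]
  exact hne (hinj h1)

/-- Let `σ : [n] → [m]` and `s : [n] → [k]` be epimorphisms in the simplex category. If for
every section `d : [k] → [n]` of `s` the composite `σ ∘ d` is injective, then there is a
unique morphism `j : [m] → [k]` with `s = j ∘ σ`. -/
theorem exists_unique_factorization_through_epi {n m k : SimplexCategory}
    (σ : n ⟶ m) (s : n ⟶ k) [Epi σ] [Epi s]
    (h : ∀ d : k ⟶ n, d ≫ s = 𝟙 k → Function.Injective ⇑(d ≫ σ).toOrderHom) :
    ∃! j : m ⟶ k, s = σ ≫ j := by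
  have hsplit : IsSplitEpi σ := isSplitEpi_of_epi σ
  have hfac : s = σ ≫ (section_ σ ≫ s) := by
    apply SimplexCategory.Hom.ext
    ext z
    have hσ : σ.toOrderHom z = σ.toOrderHom ((section_ σ).toOrderHom (σ.toOrderHom z)) := by
      have h2 := congrArg (fun g => Hom.toOrderHom g (σ.toOrderHom z)) (IsSplitEpi.id σ)
      exact h2.symm
    have hfin : s.toOrderHom z
        = s.toOrderHom ((section_ σ).toOrderHom (σ.toOrderHom z)) := by
      rcases le_total z ((section_ σ).toOrderHom (σ.toOrderHom z)) with hle | hle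
      · exact key_eq σ s h hle hσ
      · exact (key_eq σ s h hle hσ.symm).symm
    exact congrArg Fin.val hfin
  exact ⟨section_ σ ≫ s, hfac, fun j' hj' => ((cancel_epi σ).1 (hfac.symm.trans hj')).symm⟩
end

section
/- For a morphism f : X ⟶ Y of simplicial sets the following are equivalent: (i) f is degeneracy detecting, i.e. for every cell x of X, if f(x) is degenerate then x is degenerate; (ii) for every epimorphism σ : [n] → [m] in the simplex category and every x ∈ X_n, if f(x) is σ-degenerate then x is σ-degenerate; (iii) f has the right lifting property, with unique lifts, with respect to the map of standard simplices Δ[σ] : Δ[n] → Δ[m] for every epimorphism σ : [n] → [m] in the simplex category. -/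
open CategoryTheory CategoryTheory.Limits Simplicial SSet Opposite

/-- A morphism of simplicial sets is degeneracy detecting if every cell whose image is
degenerate is itself degenerate. -/
def DegeneracyDetecting {X Y : SSet.{0}} (f : X ⟶ Y) : Prop :=
  ∀ (n : SimplexCategory) (x : X.obj (op n)),
    IsDegenerate Y (f.app (op n) x) → IsDegenerate X x

open SimplexCategory

lemma yE_map {Y : SSet.{0}} {n m : SimplexCategory} (σ : n ⟶ m) (v : SSet.stdSimplex.obj m ⟶ Y) :
    (SSet.yonedaEquiv (X := Y) (n := n)) (SSet.stdSimplex.map σ ≫ v) = Y.map σ.op ((SSet.yonedaEquiv (X := Y) (n := m)) v) := by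
  obtain ⟨y, rfl⟩ := SSet.yonedaEquiv.symm.surjective v
  simp [yonedaEquiv_comp, yonedaEquiv_map]
  rfl

-- section through i
lemma exists_section {n m : SimplexCategory} (σ : n ⟶ m) (hσ : Epi σ) (i : Fin (n.len + 1)) :
    ∃ δ : m ⟶ n, δ ≫ σ = 𝟙 m ∧ δ.toOrderHom (σ.toOrderHom i) = i := by
  have hs : Function.Surjective σ.toOrderHom := epi_iff_surjective.mp hσ
  have hne : ∀ k : Fin (m.len + 1), (Finset.univ.filter fun t => σ.toOrderHom t = k).Nonempty := by
    intro k; obtain ⟨t, ht⟩ := hs k; exact ⟨t, by simp [ht]⟩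
  set pre : Fin (m.len + 1) → Fin (n.len + 1) := fun k =>
    (Finset.univ.filter fun t => σ.toOrderHom t = k).min' (hne k) with hpre_def
  have hpre : ∀ k, σ.toOrderHom (pre k) = k := by
    intro k
    have := Finset.min'_mem _ (hne k)
    simpa using (Finset.mem_filter.mp this).2
  set g : Fin (m.len + 1) → Fin (n.len + 1) := fun k => if k = σ.toOrderHom i then i else pre k with hg_def
  have hmono : Monotone g := by
    intro k₁ k₂ hk
    by_cases h₁ : k₁ = σ.toOrderHom i <;> by_cases h₂ : k₂ = σ.toOrderHom i <;>
      simp only [hg_def, h₁, h₂, if_pos, if_neg, if_true, le_refl, reduceIte]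
    · -- k₁ = σ i, k₂ ≠ : need i ≤ pre k₂
      by_contra hlt
      push_neg at hlt
      have : k₂ ≤ σ.toOrderHom i := by rw [← hpre k₂]; exact σ.toOrderHom.monotone hlt.le
      exact h₂ (le_antisymm this (h₁ ▸ hk))
    · -- k₁ ≠, k₂ = σ i : need pre k₁ ≤ i
      by_contra hlt
      push_neg at hlt
      have : σ.toOrderHom i ≤ k₁ := by rw [← hpre k₁]; exact σ.toOrderHom.monotone hlt.le
      exact h₁ (le_antisymm (h₂ ▸ hk) this)
    · -- neither
      by_contra hlt
      push_neg at hlt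
      have h3 : k₂ ≤ k₁ := by rw [← hpre k₁, ← hpre k₂]; exact σ.toOrderHom.monotone hlt.le
      have : k₁ = k₂ := le_antisymm hk h3
      subst this
      exact absurd rfl hlt.ne'
  refine ⟨SimplexCategory.Hom.mk ⟨g, hmono⟩, ?_, ?_⟩
  · apply SimplexCategory.Hom.ext'
    apply OrderHom.ext
    funext k
    show σ.toOrderHom (g k) = k
    by_cases h : k = σ.toOrderHom i
    · simp [hg_def, h]
    · simp [hg_def, h, hpre k]
  · show g (σ.toOrderHom i) = i
    simp [hg_def]

lemma len_lt_of_epi_not_iso {n m : SimplexCategory} (σ : n ⟶ m) (hσ : Epi σ)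
    (hni : ¬IsIso σ) : m.len < n.len := by
  rcases (@len_le_of_epi _ _ σ hσ).lt_or_eq with h | h
  · exact h
  · exfalso
    have : m = n := SimplexCategory.ext h
    subst this
    haveI := hσ
    rw [eq_id_of_epi σ] at hni
    exact hni inferInstance

lemma ez_exists (X : SSet.{0}) (n : SimplexCategory) (x : X.obj (op n)) :
    ∃ (p : SimplexCategory) (τ : n ⟶ p) (z : X.obj (op p)),
      Epi τ ∧ ¬IsDegenerate X z ∧ x = X.map τ.op z := by
  suffices h : ∀ (k : ℕ) (n : SimplexCategory), n.len ≤ k → ∀ x : X.obj (op n),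
      ∃ (p : SimplexCategory) (τ : n ⟶ p) (z : X.obj (op p)),
        Epi τ ∧ ¬IsDegenerate X z ∧ x = X.map τ.op z from h n.len n le_rfl x
  intro k
  induction k with
  | zero =>
    intro n hn x
    refine ⟨n, 𝟙 n, x, inferInstance, ?_, by simp⟩
    rintro ⟨m, σ, hσ, hni, -⟩
    have := len_lt_of_epi_not_iso σ hσ hni
    omega
  | succ k ih =>
    intro n hn x
    by_cases hx : IsDegenerate X x
    · obtain ⟨m, σ, hσ, hni, y, hy⟩ := hx
      have hm := len_lt_of_epi_not_iso σ hσ hni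
      obtain ⟨p, τ, z, h1, h2, h3⟩ := ih m (by omega) y
      haveI := hσ; haveI := h1
      refine ⟨p, σ ≫ τ, z, epi_comp _ _, h2, ?_⟩
      rw [hy, h3, op_comp, FunctorToTypes.map_comp_apply]
    · exact ⟨n, 𝟙 n, x, inferInstance, hx, by simp⟩

lemma theta_aux {Z : SSet.{0}} {n p p' : SimplexCategory} (τ : n ⟶ p) (τ' : n ⟶ p')
    (δ : p ⟶ n) (hδ : δ ≫ τ = 𝟙 p) {z : Z.obj (op p)} {z' : Z.obj (op p')}
    (hz : ¬IsDegenerate Z z) (h : Z.map τ.op z = Z.map τ'.op z') :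
    Mono (δ ≫ τ') ∧ z = Z.map (δ ≫ τ').op z' := by
  have hz1 : z = Z.map (δ ≫ τ').op z' := by
    have h0 : z = Z.map δ.op (Z.map τ.op z) := by
      rw [← FunctorToTypes.map_comp_apply, ← op_comp, hδ]; simp
    rw [h0, h, ← FunctorToTypes.map_comp_apply, ← op_comp]
  have fac : factorThruImage (δ ≫ τ') ≫ image.ι (δ ≫ τ') = δ ≫ τ' := image.fac _
  have hiso : IsIso (factorThruImage (δ ≫ τ')) := by
    by_contra hni
    refine hz ⟨image (δ ≫ τ'), factorThruImage (δ ≫ τ'), inferInstance, hni,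
      Z.map (image.ι (δ ≫ τ')).op z', ?_⟩
    rw [← FunctorToTypes.map_comp_apply, ← op_comp, fac]; exact hz1
  refine ⟨?_, hz1⟩
  rw [← fac]
  haveI := hiso
  exact mono_comp _ _

lemma ez_le {Z : SSet.{0}} {n p p' : SimplexCategory} (τ : n ⟶ p) (τ' : n ⟶ p')
    (hτ : Epi τ) {z : Z.obj (op p)} {z' : Z.obj (op p')}
    (hz : ¬IsDegenerate Z z) (h : Z.map τ.op z = Z.map τ'.op z') : p.len ≤ p'.len := by
  obtain ⟨δ, hδ, -⟩ := exists_section τ hτ 0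
  obtain ⟨hm, -⟩ := theta_aux τ τ' δ hδ hz h
  exact @len_le_of_mono _ _ _ hm

lemma ez_unique {Z : SSet.{0}} {n p : SimplexCategory} (τ τ' : n ⟶ p)
    (hτ : Epi τ) {z z' : Z.obj (op p)}
    (hz : ¬IsDegenerate Z z) (h : Z.map τ.op z = Z.map τ'.op z') : τ = τ' ∧ z = z' := by
  constructor
  · apply SimplexCategory.Hom.ext'
    apply OrderHom.ext
    funext i
    obtain ⟨δ, hδ, hδi⟩ := exists_section τ hτ i
    obtain ⟨hm, -⟩ := theta_aux τ τ' δ hδ hz h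
    haveI := hm
    have hθ : δ ≫ τ' = 𝟙 p := eq_id_of_mono _
    have := congrArg (fun (g : p ⟶ p) => g.toOrderHom (τ.toOrderHom i)) hθ
    calc τ.toOrderHom i = (δ ≫ τ').toOrderHom (τ.toOrderHom i) := by
          rw [hθ]; rfl
      _ = τ'.toOrderHom (δ.toOrderHom (τ.toOrderHom i)) := rfl
      _ = τ'.toOrderHom i := by rw [hδi]
  · obtain ⟨δ, hδ, -⟩ := exists_section τ hτ 0
    obtain ⟨hm, hz1⟩ := theta_aux τ τ' δ hδ hz h
    haveI := hm
    have hθ : δ ≫ τ' = 𝟙 p := eq_id_of_mono _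
    rw [hz1, hθ]; simp

namespace DegDetectAux

lemma map_epi_injective (Z : SSet.{0}) {n m : SimplexCategory} (σ : n ⟶ m) (hσ : Epi σ) :
    Function.Injective (Z.map σ.op) := by
  obtain ⟨δ, hδ, -⟩ := exists_section σ hσ 0
  intro a b hab
  have := congrArg (Z.map δ.op) hab
  rwa [← FunctorToTypes.map_comp_apply, ← FunctorToTypes.map_comp_apply, ← op_comp, hδ,
    op_id, FunctorToTypes.map_id_apply, FunctorToTypes.map_id_apply] at this

lemma yE_app {X Y : SSet.{0}} (f : X ⟶ Y) {n : SimplexCategory} (u : SSet.stdSimplex.obj n ⟶ X) :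
    (SSet.yonedaEquiv (X := Y) (n := n)) (u ≫ f) = f.app (op n) ((SSet.yonedaEquiv (X := X) (n := n)) u) := rfl

end DegDetectAux

open DegDetectAux in
/-- For a morphism `f : X ⟶ Y` of simplicial sets the following are equivalent:
(i) `f` is degeneracy detecting; (ii) for every epimorphism `σ` of the simplex category,
if `f(x)` is `σ`-degenerate then `x` is `σ`-degenerate; (iii) `f` has the right lifting
property, with unique lifts, with respect to `Δ[σ] : Δ[n] → Δ[m]` for every epimorphism
`σ : [n] → [m]` of the simplex category. -/
theorem degeneracyDetecting_iffs {X Y : SSet.{0}} (f : X ⟶ Y) :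
    (DegeneracyDetecting f ↔
      ∀ (n m : SimplexCategory) (σ : n ⟶ m), Epi σ → ∀ x : X.obj (op n),
        IsSigmaDegenerate Y σ (f.app (op n) x) → IsSigmaDegenerate X σ x) ∧
    (DegeneracyDetecting f ↔
      ∀ (n m : SimplexCategory) (σ : n ⟶ m), Epi σ →
        ∀ (u : SSet.stdSimplex.obj n ⟶ X) (v : SSet.stdSimplex.obj m ⟶ Y),
          u ≫ f = SSet.stdSimplex.map σ ≫ v →
            ∃! l : SSet.stdSimplex.obj m ⟶ X,
              SSet.stdSimplex.map σ ≫ l = u ∧ l ≫ f = v) := by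
  have key : DegeneracyDetecting f ↔
      ∀ (n m : SimplexCategory) (σ : n ⟶ m), Epi σ → ∀ x : X.obj (op n),
        IsSigmaDegenerate Y σ (f.app (op n) x) → IsSigmaDegenerate X σ x := by
    constructor
    · intro hf n m σ hσ x hd
      obtain ⟨y, hy⟩ := hd
      obtain ⟨p, τ, z, hτepi, hznd, hxz⟩ := ez_exists X n x
      have hfznd : ¬IsDegenerate Y (f.app (op p) z) := fun h => hznd (hf p z h)
      obtain ⟨q, ρ, w, hρepi, hwnd, hyw⟩ := ez_exists Y m y
      have h1 : f.app (op n) x = Y.map τ.op (f.app (op p) z) := by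
        rw [hxz]; exact NatTrans.naturality_apply f τ.op z
      haveI := hσ; haveI := hρepi; haveI := hτepi
      have h2 : f.app (op n) x = Y.map (σ ≫ ρ).op w := by
        rw [hy, hyw, op_comp, FunctorToTypes.map_comp_apply]
      have hmain : Y.map τ.op (f.app (op p) z) = Y.map (σ ≫ ρ).op w := h1.symm.trans h2
      have hpq : p = q := by
        apply SimplexCategory.ext
        exact le_antisymm (ez_le τ (σ ≫ ρ) hτepi hfznd hmain)
          (ez_le (σ ≫ ρ) τ (epi_comp _ _) hwnd hmain.symm)
      subst hpq
      obtain ⟨hττ, -⟩ := ez_unique τ (σ ≫ ρ) hτepi hfznd hmain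
      exact ⟨X.map ρ.op z, by rw [hxz, hττ, op_comp, FunctorToTypes.map_comp_apply]⟩
    · rintro h n x ⟨m, σ, hσ, hni, hd⟩
      exact ⟨m, σ, hσ, hni, h n m σ hσ x hd⟩
  refine ⟨key, key.trans ?_⟩
  constructor
  · intro h n m σ hσ u v hc
    haveI := hσ
    set x := (SSet.yonedaEquiv (X := X) (n := n)) u with hx
    set y := (SSet.yonedaEquiv (X := Y) (n := m)) v with hy
    have hxy : f.app (op n) x = Y.map σ.op y := by
      rw [hx, hy, ← yE_app f u, hc, yE_map σ v]
    obtain ⟨z, hz⟩ := h n m σ hσ x ⟨y, hxy⟩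
    have hfz : f.app (op m) z = y := by
      apply map_epi_injective Y σ hσ
      rw [← NatTrans.naturality_apply f σ.op z, ← hz, hxy]
    refine ⟨((SSet.yonedaEquiv (X := X) (n := m))).symm z, ⟨?_, ?_⟩, ?_⟩
    · apply ((SSet.yonedaEquiv (X := X) (n := n))).injective
      rw [yE_map σ _, Equiv.apply_symm_apply, ← hx, ← hz]
    · apply ((SSet.yonedaEquiv (X := Y) (n := m))).injective
      rw [yE_app f _, Equiv.apply_symm_apply, hfz]
    · intro l' ⟨h1', h2'⟩
      apply ((SSet.yonedaEquiv (X := X) (n := m))).injective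
      rw [Equiv.apply_symm_apply]
      apply map_epi_injective X σ hσ
      have := congrArg ((SSet.yonedaEquiv (X := X) (n := n))) h1'
      rw [yE_map σ l'] at this
      rw [this, ← hx, hz]
  · intro h n m σ hσ x hd
    obtain ⟨y, hxy⟩ := hd
    set u := ((SSet.yonedaEquiv (X := X) (n := n))).symm x with hu
    set v := ((SSet.yonedaEquiv (X := Y) (n := m))).symm y with hv
    have hc : u ≫ f = SSet.stdSimplex.map σ ≫ v := by
      apply ((SSet.yonedaEquiv (X := Y) (n := n))).injective
      rw [yE_app f u, yE_map σ v, hu, hv, Equiv.apply_symm_apply, Equiv.apply_symm_apply]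
      exact hxy
    obtain ⟨l, ⟨hl1, hl2⟩, -⟩ := h n m σ hσ u v hc
    refine ⟨(SSet.yonedaEquiv (X := X) (n := m)) l, ?_⟩
    have := congrArg ((SSet.yonedaEquiv (X := X) (n := n))) hl1
    rw [yE_map σ l, hu, Equiv.apply_symm_apply] at this
    exact this.symm
end

section
/- Every morphism f : X ⟶ Y of simplicial sets factors as f = q ≫ d, where d is degeneracy detecting and q has the unique left lifting property with respect to every degeneracy detecting morphism (i.e., for every commutative square with q on the left and a degeneracy detecting morphism on the right there is a unique diagonal filler). Thus degeneracy quotients and degeneracy detecting morphisms form an orthogonal factorization system on SSet. -/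
open CategoryTheory CategoryTheory.Limits Simplicial SSet Opposite

/-- A degeneracy quotient: a morphism with the unique left lifting property with respect
to every degeneracy detecting morphism. -/
def DegeneracyQuotient {X Z : SSet.{0}} (q : X ⟶ Z) : Prop :=
  ∀ ⦃A B : SSet.{0}⦄ (g : A ⟶ B), DegeneracyDetecting g →
    ∀ (u : X ⟶ A) (v : Z ⟶ B), u ≫ g = q ≫ v →
      ∃! l : Z ⟶ A, q ≫ l = u ∧ l ≫ g = v


/-- Two epimorphisms in the simplex category with the same sections are equal. -/
lemma epi_eq_of_sections {n m : SimplexCategory} (σ τ : n ⟶ m) (hσ : Epi σ)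
    (H : ∀ δ : m ⟶ n, δ ≫ σ = 𝟙 m → δ ≫ τ = 𝟙 m) : σ = τ := by
  have hsurj : Function.Surjective σ.toOrderHom :=
    SimplexCategory.epi_iff_surjective.1 hσ
  apply SimplexCategory.Hom.ext
  ext x
  set j := σ.toOrderHom x with hj
  classical
  let gfun : Fin (m.len + 1) → Fin (n.len + 1) :=
    fun j' => if j' = j then x else Classical.choose (hsurj j')
  have hg : ∀ j', σ.toOrderHom (gfun j') = j' := by
    intro j'
    by_cases h : j' = j
    · simp [gfun, h, hj]
    · simp only [gfun, if_neg h]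
      exact Classical.choose_spec (hsurj j')
  have hmono : Monotone gfun := by
    intro j1 j2 h12
    by_contra hnot
    push_neg at hnot
    have : j2 ≤ j1 := by
      have := σ.toOrderHom.monotone hnot.le
      rwa [hg, hg] at this
    have hj12 : j1 = j2 := le_antisymm h12 this
    rw [hj12] at hnot
    exact lt_irrefl _ hnot
  let δ : m ⟶ n := SimplexCategory.Hom.mk ⟨gfun, hmono⟩
  have hδσ : δ ≫ σ = 𝟙 m := by
    apply SimplexCategory.Hom.ext
    ext j'
    have := hg j'
    simp only [SimplexCategory.Hom.toOrderHom_mk, OrderHom.comp_coe,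
      SimplexCategory.comp_toOrderHom, SimplexCategory.id_toOrderHom]
    simp_all [δ]
  have hδτ := H δ hδσ
  have : τ.toOrderHom (gfun j) = j := by
    have := congrArg (fun (φ : m ⟶ m) => φ.toOrderHom j) hδτ
    simpa [δ] using this
  have hgj : gfun j = x := if_pos rfl
  rw [hgj] at this
  rw [this]

/-- Eilenberg–Zilber, existence part. -/
lemma exists_nondeg_aux (X : SSet.{0}) (k : ℕ) :
    ∀ (n : SimplexCategory), n.len = k → ∀ (x : X.obj (op n)),
    ∃ (m : SimplexCategory) (σ : n ⟶ m) (z : X.obj (op m)),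
      Epi σ ∧ ¬IsDegenerate X z ∧ x = X.map σ.op z := by
  induction k using Nat.strong_induction_on with
  | _ k IH =>
    intro n hn x
    by_cases hx : IsDegenerate X x
    · obtain ⟨m, σ, hepi, hni, y, hy⟩ := hx
      have hlt : m.len < k := by
        rcases lt_or_eq_of_le (SimplexCategory.len_le_of_epi σ) with h | h
        · omega
        · exfalso
          have : m = n := SimplexCategory.ext h
          subst this
          exact hni (by rw [SimplexCategory.eq_id_of_epi σ]; infer_instance)
      obtain ⟨p, ρ, z, hρepi, hznd, hz⟩ := IH m.len hlt m rfl y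
      refine ⟨p, σ ≫ ρ, z, epi_comp _ _, hznd, ?_⟩
      rw [hy, hz, op_comp, X.map_comp]
      rfl
    · exact ⟨n, 𝟙 n, x, inferInstance, hx, by simp⟩

lemma exists_nondeg (X : SSet.{0}) {n : SimplexCategory} (x : X.obj (op n)) :
    ∃ (m : SimplexCategory) (σ : n ⟶ m) (z : X.obj (op m)),
      Epi σ ∧ ¬IsDegenerate X z ∧ x = X.map σ.op z :=
  exists_nondeg_aux X n.len n rfl x

/-- If `σ* a = τ* b` with `σ` epi and `a` nondegenerate, then `dim a ≤ dim b`'s codomain. -/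
lemma len_le_aux {X : SSet.{0}} {n m k : SimplexCategory} (σ : n ⟶ m) (τ : n ⟶ k)
    (hσ : Epi σ) (a : X.obj (op m)) (b : X.obj (op k)) (ha : ¬IsDegenerate X a)
    (h : X.map σ.op a = X.map τ.op b) : m.len ≤ k.len := by
  haveI := hσ
  haveI : IsSplitEpi σ := isSplitEpi_of_epi σ
  set δ : m ⟶ n := section_ σ with hδ
  have hδσ : δ ≫ σ = 𝟙 m := IsSplitEpi.id σ
  have hab : a = X.map (δ ≫ τ).op b := by
    have : a = X.map δ.op (X.map σ.op a) := by
      rw [← types_comp_apply (X.map σ.op) (X.map δ.op), ← X.map_comp, ← op_comp, hδσ]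
      simp
    rw [this, h, ← types_comp_apply (X.map τ.op) (X.map δ.op), ← X.map_comp, ← op_comp]
  set e := factorThruImage (δ ≫ τ)
  set i := image.ι (δ ≫ τ)
  have hfac : e ≫ i = δ ≫ τ := image.fac (δ ≫ τ)
  have hae : a = X.map e.op (X.map i.op b) := by
    calc a = X.map (δ ≫ τ).op b := hab
      _ = X.map (e ≫ i).op b := by rw [hfac]
      _ = X.map e.op (X.map i.op b) := by rw [op_comp, X.map_comp]; rfl
  have hiso : IsIso e := by
    by_contra hni
    exact ha ⟨_, e, inferInstance, hni, ⟨X.map i.op b, hae⟩⟩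
  have h1 : m.len ≤ (image (δ ≫ τ)).len := SimplexCategory.len_le_of_mono (f := e)
  have h2 : (image (δ ≫ τ)).len ≤ k.len := SimplexCategory.len_le_of_mono i
  omega

/-- Eilenberg–Zilber, uniqueness part (same codomain). -/
lemma ez_unique_s15 {X : SSet.{0}} {n m : SimplexCategory} (σ τ : n ⟶ m)
    (hσ : Epi σ) (a b : X.obj (op m)) (ha : ¬IsDegenerate X a)
    (h : X.map σ.op a = X.map τ.op b) : σ = τ ∧ a = b := by
  have key : ∀ δ : m ⟶ n, δ ≫ σ = 𝟙 m → δ ≫ τ = 𝟙 m := by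
    intro δ hδσ
    have hab : a = X.map (δ ≫ τ).op b := by
      have : a = X.map δ.op (X.map σ.op a) := by
        rw [← types_comp_apply (X.map σ.op) (X.map δ.op), ← X.map_comp, ← op_comp, hδσ]
        simp
      rw [this, h, ← types_comp_apply (X.map τ.op) (X.map δ.op), ← X.map_comp, ← op_comp]
    set e := factorThruImage (δ ≫ τ)
    set i := image.ι (δ ≫ τ)
    have hfac : e ≫ i = δ ≫ τ := image.fac (δ ≫ τ)
    have hae : a = X.map e.op (X.map i.op b) := by
      calc a = X.map (δ ≫ τ).op b := hab
        _ = X.map (e ≫ i).op b := by rw [hfac]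
        _ = X.map e.op (X.map i.op b) := by rw [op_comp, X.map_comp]; rfl
    have hiso : IsIso e := by
      by_contra hni
      exact ha ⟨_, e, inferInstance, hni, ⟨X.map i.op b, hae⟩⟩
    haveI := hiso
    haveI : Mono (δ ≫ τ) := by
      rw [← hfac]
      exact mono_comp _ _
    exact SimplexCategory.eq_id_of_mono (δ ≫ τ)
  have hστ : σ = τ := epi_eq_of_sections σ τ hσ key
  haveI : IsSplitEpi σ := isSplitEpi_of_epi σ
  have hδσ : section_ σ ≫ σ = 𝟙 m := IsSplitEpi.id σ
  have hab : a = X.map (section_ σ ≫ τ).op b := by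
    have : a = X.map (section_ σ).op (X.map σ.op a) := by
      rw [← types_comp_apply (X.map σ.op) (X.map (section_ σ).op), ← X.map_comp, ← op_comp, hδσ]
      simp
    rw [this, h, ← types_comp_apply (X.map τ.op) (X.map (section_ σ).op), ← X.map_comp, ← op_comp]
  rw [key _ hδσ] at hab
  simp at hab
  exact ⟨hστ, hab⟩

/-- Key lemma: a degeneracy detecting morphism detects `σ`-degeneracy for each epi `σ`. -/
lemma sigma_detect {A B : SSet.{0}} {g : A ⟶ B} (hg : DegeneracyDetecting g)
    {n m : SimplexCategory} (σ : n ⟶ m) (hσ : Epi σ) (a : A.obj (op n))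
    (y : B.obj (op m)) (h : g.app (op n) a = B.map σ.op y) :
    ∃ z : A.obj (op m), a = A.map σ.op z := by
  obtain ⟨p, π, a₀, hπ, ha₀, haπ⟩ := exists_nondeg A a
  obtain ⟨r, ρ, y₀, hρ, hy₀, hyρ⟩ := exists_nondeg B y
  have hga₀ : ¬IsDegenerate B (g.app (op p) a₀) := by
    intro hdeg
    exact ha₀ (hg p a₀ hdeg)
  have hmain : B.map π.op (g.app (op p) a₀) = B.map (σ ≫ ρ).op y₀ := by
    have h1 : B.map π.op (g.app (op p) a₀) = g.app (op n) a := by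
      rw [haπ]
      exact (FunctorToTypes.naturality g π.op a₀).symm
    rw [h1, h, hyρ, op_comp, B.map_comp]
    rfl
  have hlen : p.len = r.len :=
    le_antisymm (len_le_aux π (σ ≫ ρ) hπ _ _ hga₀ hmain)
      (len_le_aux (σ ≫ ρ) π (epi_comp _ _) _ _ hy₀ hmain.symm)
  have hpr : p = r := SimplexCategory.ext hlen
  subst hpr
  obtain ⟨heq, -⟩ := ez_unique_s15 π (σ ≫ ρ) hπ _ _ hga₀ hmain
  refine ⟨A.map ρ.op a₀, ?_⟩
  rw [haπ, heq, op_comp, A.map_comp]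
  rfl

/-- The relation generating the degeneracy quotient factorization. -/
inductive QRel {X Y : SSet.{0}} (f : X ⟶ Y) :
    ∀ (k : SimplexCategoryᵒᵖ), X.obj k → X.obj k → Prop where
  | gen {n m : SimplexCategory} (σ : n ⟶ m) (δ : m ⟶ n) (hs : δ ≫ σ = 𝟙 m)
      (hepi : Epi σ) (hni : ¬IsIso σ) (x : X.obj (op n)) (y : Y.obj (op m))
      (h : f.app (op n) x = Y.map σ.op y) :
      QRel f (op n) x (X.map σ.op (X.map δ.op x))
  /-- Compatibility with the simplicial operators. -/
  | map {k k' : SimplexCategoryᵒᵖ} (α : k ⟶ k') {x x' : X.obj k} :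
      QRel f k x x' → QRel f k' (X.map α x) (X.map α x')

lemma qrel_f {X Y : SSet.{0}} {f : X ⟶ Y} {k : SimplexCategoryᵒᵖ} {x x' : X.obj k}
    (h : QRel f k x x') : f.app k x = f.app k x' := by
  induction h with
  | gen σ δ hs hepi hni x y hfx =>
    have h1 : f.app _ (X.map σ.op (X.map δ.op x)) = Y.map σ.op (Y.map δ.op (f.app _ x)) := by
      rw [FunctorToTypes.naturality f σ.op, FunctorToTypes.naturality f δ.op]
    have h2 : Y.map δ.op (f.app _ x) = y := by
      rw [hfx, ← types_comp_apply (Y.map σ.op) (Y.map δ.op), ← Y.map_comp, ← op_comp, hs]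
      simp
    rw [h1, h2, hfx]
  | map α h IH =>
    rw [FunctorToTypes.naturality f α, FunctorToTypes.naturality f α]
    exact congrArg _ IH

/-- The middle object of the factorization. -/
def QObj {X Y : SSet.{0}} (f : X ⟶ Y) : SSet.{0} where
  obj k := Quot (QRel f k)
  map α := TypeCat.ofHom (Quot.lift (fun x => Quot.mk _ (X.map α x))
    (fun _ _ h => Quot.sound (QRel.map α h)))
  map_id k := by
    ext ξ
    induction ξ using Quot.ind with
    | _ x => exact congrArg (Quot.mk _) (ConcreteCategory.congr_hom (X.map_id k) x)
  map_comp α β := by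
    ext ξ
    induction ξ using Quot.ind with
    | _ x => exact congrArg (Quot.mk _) (ConcreteCategory.congr_hom (X.map_comp α β) x)

/-- The projection onto the quotient. -/
def Qproj {X Y : SSet.{0}} (f : X ⟶ Y) : X ⟶ QObj f where
  app k := TypeCat.ofHom (fun x => Quot.mk _ x)
  naturality _ _ _ := rfl

/-- The induced map from the quotient. -/
def Qdesc {X Y : SSet.{0}} (f : X ⟶ Y) : QObj f ⟶ Y where
  app k := TypeCat.ofHom (Quot.lift (fun x => f.app k x) (fun _ _ h => qrel_f h))
  naturality k k' α := by
    ext ξ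
    induction ξ using Quot.ind with
    | _ x => exact FunctorToTypes.naturality f α x

lemma qdesc_detecting {X Y : SSet.{0}} (f : X ⟶ Y) : DegeneracyDetecting (Qdesc f) := by
  intro n ξ hdeg
  induction ξ using Quot.ind with
  | _ x =>
    obtain ⟨m, σ, hepi, hni, y, hy⟩ := hdeg
    haveI := hepi
    haveI : IsSplitEpi σ := isSplitEpi_of_epi σ
    have hs : section_ σ ≫ σ = 𝟙 m := IsSplitEpi.id σ
    refine ⟨m, σ, hepi, hni, ⟨Quot.mk _ (X.map (section_ σ).op x), ?_⟩⟩
    exact Quot.sound (QRel.gen σ (section_ σ) hs hepi hni x y hy)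

lemma qproj_quotient {X Y : SSet.{0}} (f : X ⟶ Y) :
    ∀ ⦃A B : SSet.{0}⦄ (g : A ⟶ B), DegeneracyDetecting g →
    ∀ (u : X ⟶ A) (v : QObj f ⟶ B), u ≫ g = Qproj f ≫ v →
      ∃! l : QObj f ⟶ A, Qproj f ≫ l = u ∧ l ≫ g = v := by
  intro A B g hg u v comm
  have hcomm : ∀ (k : SimplexCategoryᵒᵖ) (x : X.obj k),
      g.app k (u.app k x) = v.app k (Quot.mk _ x) :=
    fun k x => ConcreteCategory.congr_hom (congrArg (fun (t : X ⟶ B) => t.app k) comm) x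
  have usound : ∀ (k : SimplexCategoryᵒᵖ) (x x' : X.obj k),
      QRel f k x x' → u.app k x = u.app k x' := by
    intro k x x' h
    induction h with
    | gen σ δ hs hepi hni x y hfx =>
      haveI := hepi
      rename_i n m
      have hq : (Quot.mk _ x : (QObj f).obj (op n)) =
          (QObj f).map σ.op (Quot.mk _ (X.map δ.op x)) :=
        Quot.sound (QRel.gen σ δ hs hepi hni x y hfx)
      have hga : g.app (op n) (u.app (op n) x) =
          B.map σ.op (v.app (op m) (Quot.mk _ (X.map δ.op x))) := by
        rw [hcomm (op n) x, hq]
        exact FunctorToTypes.naturality v σ.op _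
      obtain ⟨z, hz⟩ := sigma_detect hg σ hepi (u.app (op n) x) _ hga
      have hback : A.map δ.op (u.app (op n) x) = z := by
        rw [hz, ← types_comp_apply (A.map σ.op) (A.map δ.op), ← A.map_comp, ← op_comp, hs]
        simp
      calc u.app (op n) x = A.map σ.op z := hz
        _ = A.map σ.op (A.map δ.op (u.app (op n) x)) := by rw [hback]
        _ = A.map σ.op (u.app (op m) (X.map δ.op x)) := by
            rw [FunctorToTypes.naturality u δ.op]
        _ = u.app (op n) (X.map σ.op (X.map δ.op x)) :=
            (FunctorToTypes.naturality u σ.op _).symm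
    | map α h IH =>
      rw [FunctorToTypes.naturality u α, FunctorToTypes.naturality u α, IH]
  let l : QObj f ⟶ A :=
    { app := fun k => TypeCat.ofHom (Quot.lift (fun x => u.app k x) (fun x x' h => usound k x x' h))
      naturality := fun k k' α => by
        ext ξ
        induction ξ using Quot.ind with
        | _ x => exact FunctorToTypes.naturality u α x }
  refine ⟨l, ⟨rfl, ?_⟩, ?_⟩
  · apply NatTrans.ext
    funext k
    ext ξ
    induction ξ using Quot.ind with
    | _ x => exact hcomm k x
  · rintro l' ⟨h1, -⟩
    apply NatTrans.ext
    funext k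
    ext ξ
    induction ξ using Quot.ind with
    | _ x => exact ConcreteCategory.congr_hom (congrArg (fun (t : X ⟶ A) => t.app k) h1) x


/-- Every morphism of simplicial sets factors as a degeneracy quotient followed by a
degeneracy detecting morphism: degeneracy quotients and degeneracy detecting morphisms
form an orthogonal factorization system on `SSet`. -/
theorem exists_degeneracyQuotient_degeneracyDetecting_factorization
    {X Y : SSet.{0}} (f : X ⟶ Y) :
    ∃ (Z : SSet.{0}) (q : X ⟶ Z) (d : Z ⟶ Y),
      f = q ≫ d ∧ DegeneracyQuotient q ∧ DegeneracyDetecting d := by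
  exact ⟨QObj f, Qproj f, Qdesc f, rfl, qproj_quotient f, qdesc_detecting f⟩
end

section
/- Let P be a partially ordered set and π : P → P an order-preserving idempotent map (π ∘ π = π) such that either π x ≤ x for all x, or π x ≥ x for all x. Let Q = π(P) be the image of π with the induced order. Then the morphism of nerves N(P) ⟶ N(Q) induced by π is a degeneracy quotient, i.e. it has the unique left lifting property with respect to every degeneracy detecting morphism of simplicial sets. -/
open CategoryTheory CategoryTheory.Limits Simplicial SSet Opposite

namespace DQAux
open SimplexCategory

lemma act_act {A : SSet.{0}} {a b c : SimplexCategory} (φ : a ⟶ b) (ψ : b ⟶ c)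
    (x : A.obj (op c)) :
    A.map φ.op (A.map ψ.op x) = A.map (φ ≫ ψ).op x := by
  rw [op_comp, FunctorToTypes.map_comp_apply]

lemma not_iso_σ {n : ℕ} (k : Fin (n+1)) : ¬ IsIso (σ k) := by
  intro h
  have h2 : SimplexCategory.mk (n+1) = SimplexCategory.mk n :=
    SimplexCategory.skeletal ⟨asIso (σ k)⟩
  have := congrArg SimplexCategory.len h2
  simp [SimplexCategory.len_mk] at this

lemma degenerate_exists {A : SSet.{0}} {n : ℕ} (a : A.obj (op ⦋n+1⦌))
    (hd : IsDegenerate A a) :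
    ∃ (p : Fin (n+1)) (y : A.obj (op ⦋n⦌)), a = A.map (σ p).op y := by
  obtain ⟨m, τ, hepi, hiso, z, hz⟩ := hd
  have hni : ¬ Function.Injective τ.toOrderHom := fun hinj =>
    hiso (SimplexCategory.isIso_of_bijective
      ⟨hinj, SimplexCategory.epi_iff_surjective.1 hepi⟩)
  obtain ⟨i, θ', hθ⟩ := SimplexCategory.eq_σ_comp_of_not_injective τ hni
  exact ⟨i, A.map θ'.op z, by rw [hz, hθ, ← act_act]⟩

lemma detect_σ {A B : SSet.{0}} {g : A ⟶ B} (hg : DegeneracyDetecting g) :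
    ∀ (n : ℕ) (a : A.obj (op ⦋n+1⦌)) (k : Fin (n+1)),
      (∃ w, g.app (op ⦋n+1⦌) a = B.map (SimplexCategory.σ k).op w) →
      ∃ y, a = A.map (SimplexCategory.σ k).op y := by
  intro n
  induction n with
  | zero =>
    intro a k hw
    obtain ⟨p, y, hy⟩ := degenerate_exists a
      (hg _ a ⟨_, σ k, inferInstance, not_iso_σ k, hw⟩)
    obtain rfl : p = k := Fin.ext (by omega)
    exact ⟨y, hy⟩
  | succ m ih =>
    intro a k hw
    obtain ⟨w, hwa⟩ := hw
    obtain ⟨p, y, hy⟩ := degenerate_exists a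
      (hg _ a ⟨_, σ k, inferInstance, not_iso_σ k, w, hwa⟩)
    rcases lt_trichotomy p k with hpk | rfl | hkp
    · -- p < k
      have hpk' : p.1 < k.1 := hpk
      have hk0 : k ≠ 0 := fun hk => by simp [hk] at hpk
      obtain ⟨k₁, hks⟩ : ∃ k₁ : Fin (m+1), k = k₁.succ :=
        ⟨k.pred hk0, (Fin.succ_pred k hk0).symm⟩
      have hk1v : k.1 = k₁.1 + 1 := by rw [hks]; rfl
      have hpl : p ≠ Fin.last (m+1) := by
        intro hp
        have := hpk.trans_le (Fin.le_last k)
        rw [hp] at this; exact lt_irrefl _ this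
      obtain ⟨p₁, hps⟩ : ∃ p₁ : Fin (m+1), p = p₁.castSucc :=
        ⟨p.castPred hpl, (Fin.castSucc_castPred p hpl).symm⟩
      have hp1v : p.1 = p₁.1 := by rw [hps]; rfl
      have hy' : y = A.map (SimplexCategory.δ p.castSucc).op a := by
        rw [hy, act_act, δ_comp_σ_self, op_id, FunctorToTypes.map_id_apply]
      have hgy : g.app (op ⦋m+1⦌) y =
          B.map (σ k₁).op (B.map (SimplexCategory.δ p).op w) := by
        have hcond1 : p ≤ k₁.castSucc := by rw [Fin.le_def, Fin.coe_castSucc]; omega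
        rw [hy', FunctorToTypes.naturality, hwa, act_act, act_act, hks,
          δ_comp_σ_of_le hcond1]
      obtain ⟨y', hy''⟩ := ih y k₁ ⟨_, hgy⟩
      refine ⟨A.map (σ p₁).op y', ?_⟩
      have hcond2 : p₁ ≤ k₁ := by rw [Fin.le_def]; omega
      rw [hy, hy'', act_act, act_act, hks, hps, σ_comp_σ hcond2]
    · exact ⟨y, hy⟩
    · -- k < p
      have hkp' : k.1 < p.1 := hkp
      have hp0 : p ≠ 0 := fun hp => by simp [hp] at hkp
      obtain ⟨p₂, hps⟩ : ∃ p₂ : Fin (m+1), p = p₂.succ :=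
        ⟨p.pred hp0, (Fin.succ_pred p hp0).symm⟩
      have hp2v : p.1 = p₂.1 + 1 := by rw [hps]; rfl
      have hkl : k ≠ Fin.last (m+1) := by
        intro hk
        have := hkp.trans_le (Fin.le_last p)
        rw [hk] at this; exact lt_irrefl _ this
      obtain ⟨k₂, hks⟩ : ∃ k₂ : Fin (m+1), k = k₂.castSucc :=
        ⟨k.castPred hkl, (Fin.castSucc_castPred k hkl).symm⟩
      have hk2v : k.1 = k₂.1 := by rw [hks]; rfl
      have hy' : y = A.map (SimplexCategory.δ p.succ).op a := by
        rw [hy, act_act, δ_comp_σ_succ, op_id, FunctorToTypes.map_id_apply]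
      have hgy : g.app (op ⦋m+1⦌) y =
          B.map (σ k₂).op (B.map (SimplexCategory.δ p).op w) := by
        have hcond3 : k₂.castSucc < p := by rw [Fin.lt_def, Fin.coe_castSucc]; omega
        rw [hy', FunctorToTypes.naturality, hwa, act_act, act_act, hks,
          δ_comp_σ_of_gt hcond3]
      obtain ⟨y', hy''⟩ := ih y k₂ ⟨_, hgy⟩
      refine ⟨A.map (σ p₂).op y', ?_⟩
      have hcond4 : k₂ ≤ p₂ := by rw [Fin.le_def]; omega
      rw [hy, hy'', act_act, act_act, hks, hps, ← σ_comp_σ hcond4]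

theorem predAbove_val {m : ℕ} (k : Fin (m+1)) (j : Fin (m+2)) :
    (k.predAbove j : ℕ) = if k.1 < j.1 then j.1 - 1 else j.1 := by
  rw [Fin.predAbove]
  rcases lt_or_ge (k.castSucc) j with h | h
  · rw [dif_pos h, if_pos (by simpa [Fin.lt_def] using h), Fin.coe_pred]
  · rw [dif_neg (not_lt.2 h), if_neg (by simp [Fin.le_def, Fin.coe_castSucc] at h; omega),
      Fin.coe_castPred]

theorem succAbove_val {m : ℕ} (k : Fin (m+2)) (j : Fin (m+1)) :
    (k.succAbove j : ℕ) = if j.1 < k.1 then j.1 else j.1 + 1 := by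
  rw [Fin.succAbove]
  rcases lt_or_ge (j.castSucc) k with h | h
  · rw [if_pos h, if_pos (by simpa [Fin.lt_def] using h), Fin.coe_castSucc]
  · rw [if_neg (not_lt.2 h), if_neg (by simp [Fin.le_def, Fin.coe_castSucc] at h; omega),
      Fin.val_succ]

variable {P : Type} [PartialOrder P]

/-- The cell of the nerve of a poset associated to a monotone map. -/
def cellOf {m : ℕ} {f : Fin (m+1) → P} (hf : Monotone f) :
    (nerve P).obj (op ⦋m⦌) := hf.functor

@[simp] lemma cellOf_obj {m : ℕ} {f : Fin (m+1) → P} (hf : Monotone f) (i : Fin (m+1)) :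
    (cellOf hf).obj i = f i := rfl

lemma cell_ext {m : ℕ} (F G : (nerve P).obj (op ⦋m⦌)) (h : ∀ i, F.obj i = G.obj i) : F = G :=
  CategoryTheory.Functor.ext h (fun _ _ _ => Subsingleton.elim _ _)

lemma nerve_map_obj {m m' : ℕ} (φ : (⦋m'⦌ : SimplexCategory) ⟶ ⦋m⦌)
    (x : (nerve P).obj (op ⦋m⦌)) (i : Fin (m'+1)) :
    ((nerve P).map φ.op x).obj i = x.obj (φ.toOrderHom i) := rfl

lemma cell_monotone {m : ℕ} (x : (nerve P).obj (op ⦋m⦌)) :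
    Monotone (fun i : Fin (m+1) => x.obj i) :=
  fun _ _ hij => leOfHom (x.map (homOfLE hij))

/-- A cell of the nerve of a poset with two equal adjacent vertices is degenerate. -/
lemma sub_deg {m : ℕ} (z : (nerve P).obj (op ⦋m+1⦌)) (k : Fin (m+1))
    (hz : z.obj k.castSucc = z.obj k.succ) :
    z = (nerve P).map (SimplexCategory.σ k).op
        ((nerve P).map (SimplexCategory.δ k.castSucc).op z) := by
  refine cell_ext _ _ (fun j => ?_)
  have hval : ((nerve P).map (SimplexCategory.σ k).op
      ((nerve P).map (SimplexCategory.δ k.castSucc).op z)).obj j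
      = z.obj ((k.castSucc).succAbove (k.predAbove j)) := rfl
  rw [hval]
  by_cases hj : j.1 = k.1
  · have h1 : j = k.castSucc := Fin.ext (by simpa using hj)
    have h2 : (k.castSucc).succAbove (k.predAbove j) = k.succ := by
      apply Fin.ext
      rw [succAbove_val, predAbove_val, Fin.coe_castSucc, Fin.val_succ]
      split_ifs <;> omega
    rw [h2, h1]
    exact hz
  · congr 1
    apply Fin.ext
    rw [succAbove_val, predAbove_val, Fin.coe_castSucc]
    have hjl : j.1 < m + 2 := j.isLt
    split_ifs <;> omega

lemma face_eq {A B : SSet.{0}} {g : A ⟶ B} (hg : DegeneracyDetecting g)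
    {P : Type} [PartialOrder P] (u : nerve P ⟶ A) {m : ℕ}
    (c : (nerve P).obj (op ⦋m+1⦌)) (k : Fin (m+1))
    (hw : ∃ w, g.app (op ⦋m+1⦌) (u.app (op ⦋m+1⦌) c) = B.map (SimplexCategory.σ k).op w) :
    u.app (op ⦋m⦌) ((nerve P).map (SimplexCategory.δ k.castSucc).op c) =
      u.app (op ⦋m⦌) ((nerve P).map (SimplexCategory.δ k.succ).op c) := by
  obtain ⟨y, hy⟩ := detect_σ hg m _ k hw
  rw [FunctorToTypes.naturality, FunctorToTypes.naturality, hy, act_act, act_act,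
    δ_comp_σ_self, δ_comp_σ_succ]

lemma mix_eq {P : Type} [PartialOrder P] {A B : SSet.{0}} {g : A ⟶ B}
    (hg : DegeneracyDetecting g) (u : nerve P ⟶ A) (π : P → P)
    (hstep : ∀ (m : ℕ) (c : (nerve P).obj (op ⦋m+1⦌)) (k : Fin (m+1)),
      π (c.obj k.castSucc) = π (c.obj k.succ) →
      ∃ w, g.app (op ⦋m+1⦌) (u.app (op ⦋m+1⦌) c) = B.map (SimplexCategory.σ k).op w)
    (m : ℕ) (a b : Fin (m+1) → P) (ha : Monotone a) (hb : Monotone b)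
    (hab : ∀ i, a i ≤ b i) (hπ : ∀ i, π (a i) = π (b i)) :
    u.app (op ⦋m⦌) (cellOf ha) = u.app (op ⦋m⦌) (cellOf hb) := by
  have hmix : ∀ k : ℕ, Monotone (fun i : Fin (m+1) => if i.1 < k then a i else b i) := by
    intro k i j hij
    have hij' : i.1 ≤ j.1 := hij
    dsimp only
    split_ifs with h1 h2 h3
    · exact ha hij
    · exact le_trans (ha hij) (hab j)
    · omega
    · exact hb hij
  suffices hS : ∀ k : ℕ, u.app (op ⦋m⦌) (cellOf (hmix k)) = u.app (op ⦋m⦌) (cellOf (hmix 0)) by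
    have h1 := hS (m+1)
    have e1 : cellOf (hmix (m+1)) = cellOf ha :=
      cell_ext _ _ (fun i => by
        have hilt : i.1 < m + 1 := i.isLt
        simp only [cellOf_obj]
        rw [if_pos hilt])
    have e0 : cellOf (hmix 0) = cellOf hb :=
      cell_ext _ _ (fun i => by
        simp only [cellOf_obj]
        rw [if_neg (by omega)])
    rw [e1, e0] at h1
    exact h1
  intro k
  induction k with
  | zero => rfl
  | succ k ih =>
    rcases le_or_gt (m+1) k with hk | hk
    · have e : cellOf (hmix (k+1)) = cellOf (hmix k) :=
        cell_ext _ _ (fun i => by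
          have hilt : i.1 < m + 1 := i.isLt
          simp only [cellOf_obj]
          rw [if_pos (by omega), if_pos (by omega)])
      rw [e]
      exact ih
    · have hcm : Monotone (fun j : Fin (m+2) =>
          if j.1 ≤ k then a ⟨min j.1 m, by omega⟩ else b ⟨j.1 - 1, by omega⟩) := by
        intro i j hij
        have hij' : i.1 ≤ j.1 := hij
        have him : i.1 ≤ m + 1 := by omega
        have hjm : j.1 ≤ m + 1 := by omega
        dsimp only
        by_cases h1 : i.1 ≤ k <;> by_cases h2 : j.1 ≤ k
        · rw [if_pos h1, if_pos h2]
          apply ha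
          exact Fin.mk_le_mk.mpr (by omega)
        · rw [if_pos h1, if_neg h2]
          refine le_trans ?_ (hab ⟨j.1 - 1, by omega⟩)
          apply ha
          exact Fin.mk_le_mk.mpr (by omega)
        · exact absurd h2 (by omega)
        · rw [if_neg h1, if_neg h2]
          apply hb
          exact Fin.mk_le_mk.mpr (by omega)
      have hdeg : π ((cellOf hcm).obj (Fin.castSucc ⟨k, hk⟩)) =
          π ((cellOf hcm).obj (Fin.succ ⟨k, hk⟩)) := by
        have e1 : (cellOf hcm).obj (Fin.castSucc ⟨k, hk⟩) = a ⟨k, hk⟩ := by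
          simp only [cellOf_obj]
          rw [if_pos (show ((⟨k, hk⟩ : Fin (m+1)).castSucc).1 ≤ k from le_refl k)]
          congr 1
          apply Fin.ext
          show min k m = k
          omega
        have e2 : (cellOf hcm).obj (Fin.succ ⟨k, hk⟩) = b ⟨k, hk⟩ := by
          simp only [cellOf_obj]
          rw [if_neg (show ¬(((⟨k, hk⟩ : Fin (m+1)).succ).1 ≤ k) from by
            show ¬(k + 1 ≤ k); omega)]
          congr 1
        rw [e1, e2]
        exact hπ ⟨k, hk⟩
      have step := face_eq hg u (cellOf hcm) ⟨k, hk⟩ (hstep m (cellOf hcm) ⟨k, hk⟩ hdeg)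
      have e1 : (nerve P).map (SimplexCategory.δ (Fin.castSucc ⟨k, hk⟩)).op (cellOf hcm)
          = cellOf (hmix k) := by
        refine cell_ext _ _ (fun i => ?_)
        have hilt : i.1 < m + 1 := i.isLt
        rw [nerve_map_obj]
        have hv : (((SimplexCategory.δ
            (Fin.castSucc (⟨k, hk⟩ : Fin (m+1)))).toOrderHom) i).1
            = if i.1 < k then i.1 else i.1 + 1 := by
          show ((Fin.castSucc (⟨k, hk⟩ : Fin (m+1))).succAbove i).1 = _
          rw [succAbove_val]
          rfl
        simp only [cellOf_obj]
        by_cases hik : i.1 < k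
        · rw [if_pos (show _ ≤ k from by rw [hv, if_pos hik]; omega), if_pos hik]
          congr 1
          apply Fin.ext
          show min _ m = i.1
          rw [hv, if_pos hik]
          omega
        · rw [if_neg (show ¬(_ ≤ k) from by rw [hv, if_neg hik]; omega), if_neg hik]
          congr 1
          apply Fin.ext
          show _ - 1 = i.1
          rw [hv, if_neg hik]
          omega
      have e2 : (nerve P).map (SimplexCategory.δ (Fin.succ ⟨k, hk⟩)).op (cellOf hcm)
          = cellOf (hmix (k+1)) := by
        refine cell_ext _ _ (fun i => ?_)
        have hilt : i.1 < m + 1 := i.isLt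
        rw [nerve_map_obj]
        have hv : (((SimplexCategory.δ
            (Fin.succ (⟨k, hk⟩ : Fin (m+1)))).toOrderHom) i).1
            = if i.1 < k + 1 then i.1 else i.1 + 1 := by
          show ((Fin.succ (⟨k, hk⟩ : Fin (m+1))).succAbove i).1 = _
          rw [succAbove_val]
          rfl
        simp only [cellOf_obj]
        by_cases hik : i.1 < k + 1
        · rw [if_pos (show _ ≤ k from by rw [hv, if_pos hik]; omega), if_pos hik]
          congr 1
          apply Fin.ext
          show min _ m = i.1
          rw [hv, if_pos hik]
          omega
        · rw [if_neg (show ¬(_ ≤ k) from by rw [hv, if_neg hik]; omega), if_neg hik]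
          congr 1
          apply Fin.ext
          show _ - 1 = i.1
          rw [hv, if_neg hik]
          omega
      rw [← e2, ← step, e1]
      exact ih

end DQAux

/-- Let `P` be a poset with an order-preserving idempotent endomorphism `π` satisfying
either `π x ≤ x` for all `x` or `x ≤ π x` for all `x`, and let `Q = π(P)` be its image.
Then the induced morphism of nerves `N(P) ⟶ N(Q)` is a degeneracy quotient. -/
theorem nerve_idempotent_proj_degeneracyQuotient
    (P : Type) [PartialOrder P] (π : P → P) (hm : Monotone π)
    (hidem : ∀ x, π (π x) = π x)
    (h : (∀ x, π x ≤ x) ∨ (∀ x, x ≤ π x)) :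
    DegeneracyQuotient
      (nerveFunctor.map
        (X := Cat.of P) (Y := Cat.of (Set.range π))
        (Functor.toCatHom (show P ⥤ (Set.range π) from
          Monotone.functor
            (f := fun x => (⟨π x, ⟨x, rfl⟩⟩ : Set.range π))
            (fun _ _ hab => hm hab)))) := by
  intro A B g hg u v hsq
  let q : nerveFunctor.obj (Cat.of P) ⟶ nerveFunctor.obj (Cat.of (Set.range π)) :=
    nerveFunctor.map
        (X := Cat.of P) (Y := Cat.of (Set.range π))
        (Functor.toCatHom (show P ⥤ (Set.range π) from
          Monotone.functor
            (f := fun x => (⟨π x, ⟨x, rfl⟩⟩ : Set.range π))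
            (fun _ _ hab => hm hab)))
  let Fs : ↥(Set.range π) ⥤ P :=
    Monotone.functor (f := fun y => (y : P)) (fun _ _ hy => hy)
  let s : nerveFunctor.obj (Cat.of ↥(Set.range π)) ⟶ nerveFunctor.obj (Cat.of P) :=
    nerveFunctor.map (X := Cat.of ↥(Set.range π)) (Y := Cat.of P) (Functor.toCatHom Fs)
  have hsqid : s ≫ q = 𝟙 _ := by
    apply NatTrans.ext
    funext n
    obtain ⟨m, rfl⟩ : ∃ m : ℕ, n = op (SimplexCategory.mk m) :=
      ⟨n.unop.len, by rw [SimplexCategory.mk_len, Opposite.op_unop]⟩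
    refine ConcreteCategory.hom_ext _ _ (fun z => ?_)
    obtain ⟨z', rfl⟩ : ∃ z' : (nerve ↥(Set.range π)).obj (op (SimplexCategory.mk m)),
        z' = z := ⟨z, rfl⟩
    show (q.app (op ⦋m⦌) (s.app (op ⦋m⦌) z') : (nerve ↥(Set.range π)).obj (op ⦋m⦌)) = z'
    refine DQAux.cell_ext (P := ↥(Set.range π)) (m := m) _ _ (fun i => ?_)
    obtain ⟨x, hx⟩ := (z'.obj i).2
    exact Subtype.ext (show π (z'.obj i).1 = (z'.obj i).1 by rw [← hx, hidem])
  have hstep : ∀ (m : ℕ) (c : (nerve P).obj (op ⦋m+1⦌)) (k : Fin (m+1)),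
      π (c.obj k.castSucc) = π (c.obj k.succ) →
      ∃ w, g.app (op ⦋m+1⦌) (u.app (op ⦋m+1⦌) c) = B.map (SimplexCategory.σ k).op w := by
    intro m c k hc
    have h1 : g.app (op ⦋m+1⦌) (u.app (op ⦋m+1⦌) c) =
        v.app (op ⦋m+1⦌) (q.app (op ⦋m+1⦌) c) := by
      exact congrFun (congrArg (fun t => t.app (op ⦋m+1⦌)) hsq) c
    have h2 : (q.app (op ⦋m+1⦌) c : (nerve ↥(Set.range π)).obj (op ⦋m+1⦌))
        = (nerve ↥(Set.range π)).map (SimplexCategory.σ k).op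
          ((nerve ↥(Set.range π)).map (SimplexCategory.δ k.castSucc).op
            (q.app (op ⦋m+1⦌) c)) :=
      DQAux.sub_deg _ k (Subtype.ext hc)
    refine ⟨v.app (op ⦋m⦌) ((nerve ↥(Set.range π)).map (SimplexCategory.δ k.castSucc).op
      (q.app (op ⦋m+1⦌) c)), ?_⟩
    rw [h1]
    conv_lhs => rw [h2]
    exact FunctorToTypes.naturality v (SimplexCategory.σ k).op _
  have hmain : q ≫ (s ≫ u) = u := by
    apply NatTrans.ext
    funext n
    obtain ⟨m, rfl⟩ : ∃ m : ℕ, n = op (SimplexCategory.mk m) :=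
      ⟨n.unop.len, by rw [SimplexCategory.mk_len, Opposite.op_unop]⟩
    refine ConcreteCategory.hom_ext _ _ (fun x => ?_)
    obtain ⟨x', rfl⟩ : ∃ x' : (nerve P).obj (op (SimplexCategory.mk m)), x' = x := ⟨x, rfl⟩
    show u.app (op ⦋m⦌) (s.app (op ⦋m⦌) (q.app (op ⦋m⦌) x')) = u.app (op ⦋m⦌) x'
    have hf : Monotone (fun i : Fin (m+1) => x'.obj i) :=
      DQAux.cell_monotone (P := P) (m := m) x'
    have hπf : Monotone (fun i : Fin (m+1) => π (x'.obj i)) :=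
      fun _ _ hij => hm (hf hij)
    have hx : x' = DQAux.cellOf hf :=
      DQAux.cell_ext (P := P) (m := m) _ _ (fun i => rfl)
    have hsx : (s.app (op ⦋m⦌) (q.app (op ⦋m⦌) x') : (nerve P).obj (op ⦋m⦌))
        = DQAux.cellOf hπf := DQAux.cell_ext (P := P) (m := m) _ _ (fun i => rfl)
    rw [hsx]
    conv_rhs => rw [hx]
    rcases h with hdec | hinc
    · exact DQAux.mix_eq (P := P) hg u π hstep m _ _ hπf hf
        (fun i => hdec _) (fun i => hidem _)
    · exact (DQAux.mix_eq (P := P) hg u π hstep m _ _ hf hπf (fun i => hinc _)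
        (fun i => (hidem _).symm)).symm
  refine ⟨s ≫ u, ⟨?_, ?_⟩, ?_⟩
  · exact hmain
  · calc (s ≫ u) ≫ g = s ≫ (u ≫ g) := by rw [Category.assoc]
    _ = s ≫ (q ≫ v) := by rw [hsq]
    _ = (s ≫ q) ≫ v := by rw [Category.assoc]
    _ = v := by rw [hsqid, Category.id_comp]
  · rintro l' ⟨h1', _⟩
    calc l' = 𝟙 _ ≫ l' := by rw [Category.id_comp]
    _ = (s ≫ q) ≫ l' := by rw [hsqid]
    _ = s ≫ (q ≫ l') := by rw [Category.assoc]
    _ = s ≫ u := congrArg (fun t => s ≫ t) h1'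
end
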